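/- arXiv:math/0609132 — 3 statements merged into one kernel-verified Lean document; each statement's English description precedes it below -/
import Mathlib

section
/- Let F and G be polyboxes in a d-box X. Then F = G if and only if for every box C' (including improper boxes) in X, the index of F relative to C equals the index of G relative to C, where the index of a polybox F relative to C is Σ_{A ∈ F'} Π_i([A_i = C_i] − [A_i = X_i\C_i] + [C_i = X_i]) for any proper suit F' of F. -/
/-!
Write `I_F(T)` for the index of `F` relative to the box `C` whose `j`-th factor is replaced by
`T`. Summing the index over all boxes containing a point `x` gives `2 ^ d` times the number of
boxes of `F` containing `x`, so the indices determine the polybox.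

Conversely, we argue by induction on the dimension and, for a fixed coordinate `j`, on the size
of the `j`-th factor `Y_j` of the ambient box. Deleting a point `z` from `Y_j` turns a proper suit
into a proper suit of the smaller box (the factor `{z}` disappears, the factor `Y_j \ {z}` is
split in two), whose polybox is the old one minus the hyperplane `x_j = z`; by additivity of `φ`
its index relative to `W` is `I_F(W) + I_F(W ∪ {z})`. These identities, applied also to the suit
obtained by complementing every `j`-th factor, force `I_F(T)` to be determined by the polybox. When
`|Y_j| = 2`, every `j`-th factor is a singleton and the index is read off the slices `x_j = y`,
which have one dimension less.
-/

open Finset Function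

namespace Polybox

section Factor

variable {α : Type*} [DecidableEq α] {Y C S W : Finset α} {z w : α}

/-- The coefficient `φ_C(S)` of the index, relative to an ambient set `Y` in which complements
are taken. -/
def indexCoeff (Y C S : Finset α) : ℤ :=
  (if S = C then 1 else 0) - (if S = Y \ C then 1 else 0) + (if C = Y then 1 else 0)

lemma indexCoeff_self_of_ne (hS : S.Nonempty) (hSY : S ≠ Y) : indexCoeff Y Y S = 1 := by
  simp [indexCoeff, hSY, hS.ne_empty]

lemma indexCoeff_empty (hCY : C ⊆ Y) (hC : C.Nonempty) : indexCoeff Y C ∅ = 0 := by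
  have : (∅ : Finset α) = Y \ C ↔ C = Y := by
    rw [eq_comm, sdiff_eq_empty_iff_subset]
    exact ⟨hCY.antisymm, fun h => h.ge⟩
  simp [indexCoeff, hC.ne_empty.symm, this]

lemma sdiff_ne_self_of_nonempty (hCY : C ⊆ Y) (hC : C.Nonempty) : Y \ C ≠ Y := by
  intro h
  obtain ⟨a, ha⟩ := hC
  have := h ▸ hCY ha
  exact (mem_sdiff.mp this).2 ha

lemma indexCoeff_sdiff (hCY : C ⊆ Y) (hC : C.Nonempty) (hCne : C ≠ Y) :
    indexCoeff Y (Y \ C) S = -indexCoeff Y C S := by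
  simp only [indexCoeff, Finset.sdiff_sdiff_eq_self hCY, if_neg (sdiff_ne_self_of_nonempty hCY hC),
    if_neg hCne]
  ring

lemma indexCoeff_sdiff_sdiff (hSY : S ⊆ Y) (hCY : C ⊆ Y) (hC : C.Nonempty) (hCne : C ≠ Y) :
    indexCoeff Y C (Y \ S) = indexCoeff Y (Y \ C) S := by
  rw [indexCoeff_sdiff hCY hC hCne, indexCoeff, indexCoeff]
  simp only [(sdiff_eq_comm hSY hCY).trans eq_comm, sdiff_right_inj hSY hCY, if_neg hCne]
  ring

/-- Additivity of `φ_C` under splitting a factor into two complementary halves. -/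
lemma indexCoeff_add_indexCoeff_sdiff (hSY : S ⊆ Y) (hCY : C ⊆ Y) (hC : C.Nonempty) :
    indexCoeff Y C S + indexCoeff Y C (Y \ S) = indexCoeff Y C Y := by
  simp only [indexCoeff, (sdiff_eq_comm hSY hCY).trans eq_comm, sdiff_right_inj hSY hCY,
    eq_comm (a := Y), if_neg (sdiff_ne_self_of_nonempty hCY hC)]
  ring

lemma erase_eq_iff_eq_or_eq_insert (hz : z ∉ W) : S.erase z = W ↔ S = W ∨ S = insert z W := by
  by_cases hzS : z ∈ S
  · rw [erase_eq_iff_eq_insert hzS hz]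
    exact ⟨Or.inr, fun h => h.resolve_left fun e => hz (e ▸ hzS)⟩
  · rw [erase_eq_of_notMem hzS]
    exact ⟨Or.inl, fun h => h.resolve_right fun e => hzS (e ▸ mem_insert_self z W)⟩

lemma ite_erase_eq (hz : z ∉ W) :
    (if S.erase z = W then 1 else 0 : ℤ) =
      (if S = W then 1 else 0) + (if S = insert z W then 1 else 0) := by
  have hne : W ≠ insert z W := fun h => hz (h ▸ mem_insert_self z W)
  by_cases h : S = W
  · simp [h, hne, erase_eq_of_notMem hz]
  · simp [h, erase_eq_iff_eq_or_eq_insert hz]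

lemma indexCoeff_erase (hz : z ∈ Y) (hW : W ⊆ Y.erase z) :
    indexCoeff (Y.erase z) W (S.erase z) = indexCoeff Y W S + indexCoeff Y (insert z W) S := by
  have hzW : z ∉ W := fun h => (mem_erase.mp (hW h)).1 rfl
  have hcompl : Y.erase z \ W = Y \ insert z W := by
    ext x; simp only [mem_sdiff, mem_erase, mem_insert]; tauto
  have hins : insert z (Y \ insert z W) = Y \ W := by
    ext x; by_cases hx : x = z <;> simp [hx, hz, hzW]
  have hzV : z ∉ Y \ insert z W := by simp
  have hWY : W ≠ Y := fun h => hzW (h ▸ hz)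
  have htop : insert z W = Y ↔ W = Y.erase z := by
    rw [eq_comm, ← erase_eq_iff_eq_insert hz hzW, eq_comm]
  rw [indexCoeff, indexCoeff, indexCoeff, ite_erase_eq hzW, hcompl, ite_erase_eq hzV, hins,
    if_neg hWY]
  simp only [← htop]
  ring

/-- A rule `π` replacing each proper factor `S ⊊ Y` by proper factors of `Y'`, in such a way that
replacing the factors of a proper suit along one coordinate yields a proper suit again. -/
structure IsFactorReplacement (Y Y' : Finset α) (π : Finset α → Finset (Finset α)) : Prop where
  proper : ∀ S ⊆ Y, S.Nonempty → S ≠ Y → ∀ T ∈ π S, T ⊆ Y' ∧ T.Nonempty ∧ T ≠ Y'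
  sdiff_of_ne : ∀ S ⊆ Y, S.Nonempty → S ≠ Y → ∀ T ∈ π S, ∀ T' ∈ π S, T ≠ T' → T = Y' \ T'
  sdiff_of_sdiff : ∀ S ⊆ Y, S.Nonempty → S ≠ Y → ∀ T ∈ π S, ∀ T' ∈ π (Y \ S), T = Y' \ T'

lemma isFactorReplacement_sdiff : IsFactorReplacement Y Y (fun S => {Y \ S}) where
  proper S hSY hS hSne T hT := by
    rw [mem_singleton.mp hT]
    exact ⟨sdiff_subset, sdiff_nonempty.mpr fun h => hSne (hSY.antisymm h),
      sdiff_ne_self_of_nonempty hSY hS⟩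
  sdiff_of_ne S _ _ _ T hT T' hT' hne := absurd ((mem_singleton.mp hT).trans
    (mem_singleton.mp hT').symm) hne
  sdiff_of_sdiff S hSY _ _ T hT T' hT' := by
    rw [mem_singleton.mp hT, mem_singleton.mp hT', Finset.sdiff_sdiff_eq_self hSY]

/-- The factors replacing `S` when the point `z` is deleted from `Y`: the factor `{z}` disappears,
`Y \ {z}` (which would become improper) is split along an auxiliary point `w`, and every other
factor loses `z`. -/
def erasePieces (Y : Finset α) (z w : α) (S : Finset α) : Finset (Finset α) :=
  if S = {z} then ∅ else if S = Y.erase z then {{w}, (Y.erase z).erase w} else {S.erase z}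

lemma exists_mem_erasePieces_iff (hw : w ∈ Y.erase z) {x : α} :
    (∃ T ∈ erasePieces Y z w S, x ∈ T) ↔ x ∈ S ∧ x ≠ z := by
  unfold erasePieces
  split_ifs with h₁ h₂
  · simp [h₁]
  · subst h₂
    constructor
    · rintro ⟨T, hT, hx⟩
      rcases mem_insert.mp hT with rfl | hT
      · rw [mem_singleton.mp hx]; exact ⟨hw, (mem_erase.mp hw).1⟩
      · rw [mem_singleton.mp hT] at hx
        exact ⟨mem_of_mem_erase hx, (mem_erase.mp (mem_of_mem_erase hx)).1⟩
    · rintro ⟨hx, -⟩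
      by_cases hxw : x = w
      · exact ⟨{w}, mem_insert_self _ _, hxw ▸ mem_singleton_self x⟩
      · exact ⟨_, mem_insert_of_mem (mem_singleton_self _), mem_erase.mpr ⟨hxw, hx⟩⟩
  · simp [and_comm]

lemma sum_erasePieces (hz : z ∈ Y) (hw : w ∈ Y.erase z) (hW : W ⊆ Y.erase z)
    (hWne : W.Nonempty) :
    ∑ T ∈ erasePieces Y z w S, indexCoeff (Y.erase z) W T =
      indexCoeff Y W S + indexCoeff Y (insert z W) S := by
  rw [← indexCoeff_erase hz hW, erasePieces]
  split_ifs with h₁ h₂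
  · rw [h₁, erase_singleton, sum_empty, indexCoeff_empty hW hWne]
  · have hne : ({w} : Finset α) ≠ (Y.erase z).erase w := fun h =>
      notMem_erase w _ (h ▸ mem_singleton_self w)
    rw [sum_pair hne, h₂, erase_idem, ← sdiff_singleton_eq_erase w,
      indexCoeff_add_indexCoeff_sdiff (singleton_subset_iff.mpr hw) hW hWne]
  · rw [sum_singleton]

lemma subset_nonempty_ne_of_mem_erasePieces (hz : z ∈ Y) (hw : w ∈ Y.erase z)
    (hw' : ((Y.erase z).erase w).Nonempty) {T : Finset α} (hSY : S ⊆ Y) (hS : S.Nonempty)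
    (hSne : S ≠ Y) (hT : T ∈ erasePieces Y z w S) :
    T ⊆ Y.erase z ∧ T.Nonempty ∧ T ≠ Y.erase z := by
  unfold erasePieces at hT
  split_ifs at hT with h₁ h₂
  · simp at hT
  · rcases mem_insert.mp hT with rfl | hT
    · refine ⟨singleton_subset_iff.mpr hw, singleton_nonempty w, fun h => ?_⟩
      simp [← h] at hw'
    · rw [mem_singleton.mp hT]
      exact ⟨erase_subset _ _, hw', fun h => notMem_erase w _ (h ▸ hw)⟩
  · rw [mem_singleton.mp hT]
    refine ⟨erase_subset_erase z hSY, ?_, fun h => ?_⟩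
    · obtain ⟨a, ha⟩ := hS
      by_cases haz : a = z
      · subst haz
        obtain ⟨b, hb, hba⟩ := (S.eq_singleton_or_nontrivial ha).resolve_left h₁ |>.exists_ne a
        exact ⟨b, mem_erase.mpr ⟨hba, hb⟩⟩
      · exact ⟨a, mem_erase.mpr ⟨haz, ha⟩⟩
    · rcases (erase_eq_iff_eq_or_eq_insert (notMem_erase z Y)).mp h with h | h
      · exact h₂ h
      · exact hSne (h.trans (insert_erase hz))

lemma isFactorReplacement_erasePieces (hz : z ∈ Y) (hw : w ∈ Y.erase z)
    (hw' : ((Y.erase z).erase w).Nonempty) :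
    IsFactorReplacement Y (Y.erase z) (erasePieces Y z w) := by
  have hYz : Y \ Y.erase z = {z} := sdiff_erase_self hz
  refine ⟨fun S hSY hS hSne T hT => subset_nonempty_ne_of_mem_erasePieces hz hw hw' hSY hS hSne hT,
    fun S _ _ _ T hT T' hT' hne => ?_, fun S hSY hS hSne T hT T' hT' => ?_⟩
  · unfold erasePieces at hT hT'
    split_ifs at hT hT' with h₁ h₂
    · simp at hT
    · rcases mem_insert.mp hT with rfl | hT <;> rcases mem_insert.mp hT' with rfl | hT'
      · exact absurd rfl hne
      · rw [mem_singleton.mp hT', sdiff_erase_self hw]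
      · rw [mem_singleton.mp hT, sdiff_singleton_eq_erase]
      · exact absurd ((mem_singleton.mp hT).trans (mem_singleton.mp hT').symm) hne
    · exact absurd ((mem_singleton.mp hT).trans (mem_singleton.mp hT').symm) hne
  · unfold erasePieces at hT hT'
    have hYS₁ : Y \ S = {z} ↔ S = Y.erase z := by
      rw [← hYz, sdiff_right_inj hSY (erase_subset z Y)]
    have hYS₂ : Y \ S = Y.erase z ↔ S = {z} := by
      rw [sdiff_eq_comm hSY (erase_subset z Y), hYz, eq_comm]
    split_ifs at hT hT' with h₁ h₂ h₃ h₄ <;> simp_all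
    ext x
    simp only [mem_erase, mem_sdiff]
    have := @hSY x
    tauto

lemma eq_zero_of_add_insert_eq_zero {M : Type*} [AddGroup M] {D : Finset α → M}
    (hsingle : ∀ z ∈ Y, D {z} = 0)
    (hinsert : ∀ z ∈ Y, ∀ W ⊆ Y.erase z, W.Nonempty → D W + D (insert z W) = 0)
    (hSY : S ⊆ Y) (hS : S.Nonempty) : D S = 0 := by
  induction hS using Nonempty.cons_induction with
  | singleton a => exact hsingle a (singleton_subset_iff.mp hSY)
  | cons a s ha hs ih =>
    rw [cons_eq_insert] at hSY ⊢
    have haY := hSY (mem_insert_self a s)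
    have hsY : s ⊆ Y.erase a := fun x hx =>
      mem_erase.mpr ⟨fun h => ha (h ▸ hx), hSY (mem_insert_of_mem hx)⟩
    have h := hinsert a haY s hsY hs
    rwa [ih (hsY.trans (erase_subset a Y)), zero_add] at h

lemma eq_singleton_or_eq_singleton_of_subset_pair {a b : α} (hSY : S ⊆ {a, b})
    (hS : S.Nonempty) (hSne : S ≠ {a, b}) : S = {a} ∨ S = {b} := by
  have hcard : S.card < 2 := by
    refine lt_of_le_of_ne ((card_le_card hSY).trans card_le_two) fun h => hSne ?_
    exact eq_of_subset_of_card_le hSY (h ▸ card_le_two)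
  obtain ⟨c, rfl⟩ := card_eq_one.mp (show S.card = 1 by have := hS.card_pos; omega)
  simpa using hSY

end Factor

section Suit

variable {ι : Type*} {X : ι → Type*}

def polybox (F : Finset (∀ i, Finset (X i))) : Set (∀ i, X i) :=
  {x | ∃ A ∈ F, ∀ i, x i ∈ A i}

lemma forall_mem_iff_forall_ne_and {x : ∀ i, X i} {A : ∀ i, Finset (X i)} (j : ι) :
    (∀ i, x i ∈ A i) ↔ (∀ i ≠ j, x i ∈ A i) ∧ x j ∈ A j := by
  refine ⟨fun h => ⟨fun i _ => h i, h j⟩, fun h i => ?_⟩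
  rcases eq_or_ne i j with rfl | hij
  exacts [h.2, h.1 i hij]

lemma update_mem_polybox_iff [DecidableEq ι] {F : Finset (∀ i, Finset (X i))} {x : ∀ i, X i}
    {j : ι} {y : X j} :
    update x j y ∈ polybox F ↔ ∃ A ∈ F, (∀ i ≠ j, x i ∈ A i) ∧ y ∈ A j := by
  change (∃ A ∈ F, ∀ i, update x j y i ∈ A i) ↔ _
  refine exists_congr fun A => and_congr_right fun _ => (forall_mem_iff_forall_ne_and j).trans ?_
  refine and_congr (forall₂_congr fun i hij => ?_) ?_ <;> simp [*]

variable [∀ i, DecidableEq (X i)]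

/-- `F` is a proper suit in the box `Y`: its boxes are proper sub-boxes of `Y`, and any two of them
are dichotomous, i.e. complementary (in `Y`) along some coordinate. -/
structure IsProperSuit (Y : ∀ i, Finset (X i)) (F : Finset (∀ i, Finset (X i))) : Prop where
  subset : ∀ A ∈ F, ∀ i, A i ⊆ Y i
  nonempty : ∀ A ∈ F, ∀ i, (A i).Nonempty
  ne : ∀ A ∈ F, ∀ i, A i ≠ Y i
  dichotomous : ∀ A ∈ F, ∀ B ∈ F, A ≠ B → ∃ i, A i = Y i \ B i

variable {Y : ∀ i, Finset (X i)} {F G : Finset (∀ i, Finset (X i))} {j : ι} {x : ∀ i, X i}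

lemma IsProperSuit.eq_sdiff_of_not_disjoint (hF : IsProperSuit Y F) {A B : ∀ i, Finset (X i)}
    (hA : A ∈ F) (hB : B ∈ F) (hAB : A ≠ B) (h : ∀ i ≠ j, ¬Disjoint (A i) (B i)) :
    A j = Y j \ B j := by
  obtain ⟨i, hi⟩ := hF.dichotomous A hA B hB hAB
  by_cases hij : i = j
  · exact hij ▸ hi
  · exact absurd (hi ▸ sdiff_disjoint) (h i hij)

lemma IsProperSuit.eq_empty_of_card_le_one (hF : IsProperSuit Y F)
    (hY : (Y j).card ≤ 1) : F = ∅ := by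
  refine eq_empty_iff_forall_notMem.mpr fun A hA => hF.ne A hA j ?_
  exact eq_of_subset_of_card_le (hF.subset A hA j) (hY.trans (hF.nonempty A hA j).card_pos)

variable [Fintype ι] [DecidableEq ι]

def replaceAt (j : ι) (π : Finset (X j) → Finset (Finset (X j)))
    (F : Finset (∀ i, Finset (X i))) : Finset (∀ i, Finset (X i)) :=
  F.biUnion fun A => (π (A j)).image (update A j)

variable {π : Finset (X j) → Finset (Finset (X j))} {Yj : Finset (X j)}

lemma mem_replaceAt {B : ∀ i, Finset (X i)} :
    B ∈ replaceAt j π F ↔ ∃ A ∈ F, ∃ T ∈ π (A j), update A j T = B := by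
  simp [replaceAt]

lemma IsProperSuit.replaceAt (hF : IsProperSuit Y F) (hπ : IsFactorReplacement (Y j) Yj π) :
    IsProperSuit (update Y j Yj) (replaceAt j π F) := by
  have hproper : ∀ B ∈ Polybox.replaceAt j π F, ∀ i,
      B i ⊆ update Y j Yj i ∧ (B i).Nonempty ∧ B i ≠ update Y j Yj i := by
    intro B hB i
    obtain ⟨A, hA, T, hT, rfl⟩ := mem_replaceAt.mp hB
    rcases eq_or_ne i j with rfl | hij
    · simpa only [update_self] using
        hπ.proper _ (hF.subset A hA i) (hF.nonempty A hA i) (hF.ne A hA i) T hT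
    · simp only [update_of_ne hij]
      exact ⟨hF.subset A hA i, hF.nonempty A hA i, hF.ne A hA i⟩
  refine ⟨fun B hB i => (hproper B hB i).1, fun B hB i => (hproper B hB i).2.1,
    fun B hB i => (hproper B hB i).2.2, fun B₁ hB₁ B₂ hB₂ hne => ?_⟩
  obtain ⟨A₁, hA₁, T₁, hT₁, rfl⟩ := mem_replaceAt.mp hB₁
  obtain ⟨A₂, hA₂, T₂, hT₂, rfl⟩ := mem_replaceAt.mp hB₂
  by_cases hA : A₁ = A₂
  · subst hA
    refine ⟨j, ?_⟩
    simp only [update_self]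
    exact hπ.sdiff_of_ne _ (hF.subset A₁ hA₁ j) (hF.nonempty A₁ hA₁ j) (hF.ne A₁ hA₁ j)
      T₁ hT₁ T₂ hT₂ fun h => hne (h ▸ rfl)
  obtain ⟨i, hi⟩ := hF.dichotomous A₁ hA₁ A₂ hA₂ hA
  refine ⟨i, ?_⟩
  rcases eq_or_ne i j with rfl | hij
  · have hA₂i : A₂ i = Y i \ A₁ i :=
      ((sdiff_eq_comm (hF.subset A₂ hA₂ i) (hF.subset A₁ hA₁ i)).mp hi.symm).symm
    simp only [update_self]
    exact hπ.sdiff_of_sdiff _ (hF.subset A₁ hA₁ i) (hF.nonempty A₁ hA₁ i) (hF.ne A₁ hA₁ i)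
      T₁ hT₁ T₂ (hA₂i ▸ hT₂)
  · simpa only [update_of_ne hij] using hi

lemma pairwiseDisjoint_image_update (hF : IsProperSuit Y F) (hπ : IsFactorReplacement (Y j) Yj π) :
    (F : Set (∀ i, Finset (X i))).PairwiseDisjoint fun A => (π (A j)).image (update A j) := by
  intro A hA B hB hAB
  refine disjoint_left.mpr fun D hDA hDB => ?_
  obtain ⟨T, hT, rfl⟩ := mem_image.mp hDA
  obtain ⟨T', hT', hBA⟩ := mem_image.mp hDB
  obtain rfl : T' = T := by simpa using congrFun hBA j
  have hAj := hF.eq_sdiff_of_not_disjoint (j := j) hA hB hAB fun i hij => by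
    rw [← update_of_ne hij T' A, ← hBA, update_of_ne hij, disjoint_self]
    exact (hF.nonempty B hB i).ne_empty
  have hBj : B j = Y j \ A j :=
    ((sdiff_eq_comm (hF.subset B hB j) (hF.subset A hA j)).mp hAj.symm).symm
  have hSY := hF.subset A hA j
  have hS := hF.nonempty A hA j
  have hSne := hF.ne A hA j
  have hT₀ := hπ.sdiff_of_sdiff _ hSY hS hSne _ hT _ (hBj ▸ hT')
  obtain ⟨a, ha⟩ := (hπ.proper _ hSY hS hSne _ hT).2.1
  exact (mem_sdiff.mp (hT₀ ▸ ha)).2 ha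

lemma mem_polybox_replaceAt :
    x ∈ polybox (replaceAt j π F) ↔ ∃ A ∈ F, (∀ i ≠ j, x i ∈ A i) ∧ ∃ T ∈ π (A j), x j ∈ T := by
  constructor
  · rintro ⟨B, hB, hx⟩
    obtain ⟨A, hA, T, hT, rfl⟩ := mem_replaceAt.mp hB
    exact ⟨A, hA, fun i hij => by simpa [update_of_ne hij] using hx i, T, hT, by simpa using hx j⟩
  · rintro ⟨A, hA, hxA, T, hT, hxT⟩
    refine ⟨update A j T, mem_replaceAt.mpr ⟨A, hA, T, hT, rfl⟩,
      (forall_mem_iff_forall_ne_and j).mpr ⟨fun i hij => ?_, by simpa using hxT⟩⟩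
    simpa [update_of_ne hij] using hxA i hij

lemma polybox_replaceAt_erasePieces {z w : X j} (hw : w ∈ (Y j).erase z) :
    polybox (replaceAt j (erasePieces (Y j) z w) F) = polybox F ∩ {x | x j ≠ z} := by
  ext x
  rw [mem_polybox_replaceAt, Set.mem_inter_iff, polybox, Set.mem_ofPred_eq]
  simp only [exists_mem_erasePieces_iff hw, forall_mem_iff_forall_ne_and j]
  exact ⟨fun ⟨A, hA, h₁, h₂, h₃⟩ => ⟨⟨A, hA, h₁, h₂⟩, h₃⟩,
    fun ⟨⟨A, hA, h₁, h₂⟩, h₃⟩ => ⟨A, hA, h₁, h₂, h₃⟩⟩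

def flipAt (Y : ∀ i, Finset (X i)) (j : ι) (F : Finset (∀ i, Finset (X i))) :
    Finset (∀ i, Finset (X i)) :=
  replaceAt j (fun S => {Y j \ S}) F

lemma IsProperSuit.flipAt (hF : IsProperSuit Y F) (j : ι) : IsProperSuit Y (flipAt Y j F) := by
  have h := hF.replaceAt (j := j) (isFactorReplacement_sdiff (Y := Y j))
  rwa [update_eq_self] at h

lemma mem_polybox_flipAt (hF : IsProperSuit Y F) :
    x ∈ polybox (flipAt Y j F) ↔ x j ∈ Y j ∧ (∃ y ∈ Y j, update x j y ∈ polybox F) ∧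
      (x ∈ polybox F → ∀ y ∈ Y j, update x j y ∈ polybox F) := by
  have hcompl : ∀ A ∈ F, ∀ B ∈ F, A ≠ B → (∀ i ≠ j, x i ∈ A i) → (∀ i ≠ j, x i ∈ B i) →
      A j = Y j \ B j := fun A hA B hB hAB hxA hxB =>
    hF.eq_sdiff_of_not_disjoint hA hB hAB fun i hij =>
      not_disjoint_iff.mpr ⟨x i, hxA i hij, hxB i hij⟩
  simp only [flipAt, mem_polybox_replaceAt, mem_singleton, exists_eq_left]
  constructor
  · rintro ⟨A, hA, hxA, hxj⟩
    obtain ⟨hxY, hxA'⟩ := mem_sdiff.mp hxj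
    obtain ⟨y, hy⟩ := hF.nonempty A hA j
    refine ⟨hxY, ⟨y, hF.subset A hA j hy, update_mem_polybox_iff.mpr ⟨A, hA, hxA, hy⟩⟩, ?_⟩
    rintro ⟨B, hB, hxB⟩ y' hy'
    have hBj := hcompl B hB A hA (fun h => hxA' (h ▸ hxB j)) (fun i _ => hxB i) hxA
    by_cases hy'A : y' ∈ A j
    · exact update_mem_polybox_iff.mpr ⟨A, hA, hxA, hy'A⟩
    · exact update_mem_polybox_iff.mpr ⟨B, hB, fun i _ => hxB i, hBj ▸ mem_sdiff.mpr ⟨hy', hy'A⟩⟩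
  · rintro ⟨hxY, ⟨y, -, hxy⟩, hline⟩
    obtain ⟨A, hA, hxA, -⟩ := update_mem_polybox_iff.mp hxy
    by_cases hxA' : x j ∈ A j
    · obtain ⟨u, hu⟩ : (Y j \ A j).Nonempty :=
        sdiff_nonempty.mpr fun h => hF.ne A hA j ((hF.subset A hA j).antisymm h)
      have hx : x ∈ polybox F := ⟨A, hA, (forall_mem_iff_forall_ne_and j).mpr ⟨hxA, hxA'⟩⟩
      obtain ⟨B, hB, hxB, huB⟩ := update_mem_polybox_iff.mp (hline hx u (mem_sdiff.mp hu).1)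
      have hBj := hcompl B hB A hA (fun h => (mem_sdiff.mp hu).2 (h ▸ huB)) hxB hxA
      refine ⟨B, hB, hxB, ?_⟩
      rwa [hBj, Finset.sdiff_sdiff_eq_self (hF.subset A hA j)]
    · exact ⟨A, hA, hxA, mem_sdiff.mpr ⟨hxY, hxA'⟩⟩

lemma polybox_flipAt_congr (hF : IsProperSuit Y F) (hG : IsProperSuit Y G)
    (h : polybox F = polybox G) : polybox (flipAt Y j F) = polybox (flipAt Y j G) := by
  ext x
  rw [mem_polybox_flipAt hF, mem_polybox_flipAt hG, h]

def sliceAt (j : ι) (y : X j) (F : Finset (∀ i, Finset (X i))) :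
    Finset (∀ i : {i // i ≠ j}, Finset (X i)) :=
  (F.filter fun A => y ∈ A j).image fun A i => A i

variable {y : X j}

lemma mem_sliceAt {B : ∀ i : {i // i ≠ j}, Finset (X i)} :
    B ∈ sliceAt j y F ↔ ∃ A ∈ F, y ∈ A j ∧ (fun i : {i // i ≠ j} => A i) = B := by
  simp [sliceAt, and_assoc]

lemma IsProperSuit.sliceAt (hF : IsProperSuit Y F) :
    IsProperSuit (fun i : {i // i ≠ j} => Y i) (sliceAt j y F) := by
  refine ⟨?_, ?_, ?_, ?_⟩
  · rintro _ hB i; obtain ⟨A, hA, -, rfl⟩ := mem_sliceAt.mp hB; exact hF.subset A hA i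
  · rintro _ hB i; obtain ⟨A, hA, -, rfl⟩ := mem_sliceAt.mp hB; exact hF.nonempty A hA i
  · rintro _ hB i; obtain ⟨A, hA, -, rfl⟩ := mem_sliceAt.mp hB; exact hF.ne A hA i
  intro _ hA' _ hB' hne
  obtain ⟨A, hA, hyA, rfl⟩ := mem_sliceAt.mp hA'
  obtain ⟨B, hB, hyB, rfl⟩ := mem_sliceAt.mp hB'
  obtain ⟨i, hi⟩ := hF.dichotomous A hA B hB fun h => hne (h ▸ rfl)
  rcases eq_or_ne i j with rfl | hij
  · exact absurd (hi ▸ hyA) fun h => (mem_sdiff.mp h).2 hyB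
  · exact ⟨⟨i, hij⟩, hi⟩

lemma mem_polybox_sliceAt {u : ∀ i : {i // i ≠ j}, X i} :
    u ∈ polybox (sliceAt j y F) ↔ (Equiv.piSplitAt j X).symm (y, u) ∈ polybox F := by
  constructor
  · rintro ⟨B, hB, huB⟩
    obtain ⟨A, hA, hyA, rfl⟩ := mem_sliceAt.mp hB
    refine ⟨A, hA, (forall_mem_iff_forall_ne_and j).mpr ⟨fun i hij => ?_, by simpa using hyA⟩⟩
    simpa [hij] using huB ⟨i, hij⟩
  · rintro ⟨A, hA, hxA⟩
    refine ⟨_, mem_sliceAt.mpr ⟨A, hA, by simpa using hxA j, rfl⟩, fun i => ?_⟩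
    simpa [i.2] using hxA i

end Suit

section Index

variable {ι : Type*} [Fintype ι] [DecidableEq ι] {X : ι → Type*} [∀ i, DecidableEq (X i)]

def index (Y C : ∀ i, Finset (X i)) (F : Finset (∀ i, Finset (X i))) : ℤ :=
  ∑ A ∈ F, ∏ i, indexCoeff (Y i) (C i) (A i)

def offCoeff (Y C : ∀ i, Finset (X i)) (j : ι) (A : ∀ i, Finset (X i)) : ℤ :=
  ∏ i ∈ univ.erase j, indexCoeff (Y i) (C i) (A i)

variable {Y C : ∀ i, Finset (X i)} {F : Finset (∀ i, Finset (X i))} {j : ι}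

lemma offCoeff_update (A : ∀ i, Finset (X i)) (S : Finset (X j)) :
    offCoeff Y C j (update A j S) = offCoeff Y C j A :=
  prod_congr rfl fun i hi => by rw [update_of_ne (ne_of_mem_erase hi)]

lemma index_update_update (Yj T : Finset (X j)) :
    index (update Y j Yj) (update C j T) F =
      ∑ A ∈ F, indexCoeff Yj T (A j) * offCoeff Y C j A := by
  refine sum_congr rfl fun A _ => ?_
  rw [← mul_prod_erase univ _ (mem_univ j), update_self, update_self]
  congr 1
  refine prod_congr rfl fun i hi => ?_
  rw [update_of_ne (ne_of_mem_erase hi), update_of_ne (ne_of_mem_erase hi)]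

lemma index_update (T : Finset (X j)) :
    index Y (update C j T) F = ∑ A ∈ F, indexCoeff (Y j) T (A j) * offCoeff Y C j A := by
  rw [← index_update_update, update_eq_self]

lemma index_eq_sum_offCoeff (j : ι) :
    index Y C F = ∑ A ∈ F, indexCoeff (Y j) (C j) (A j) * offCoeff Y C j A := by
  rw [← index_update, update_eq_self]

lemma index_update_sdiff {T : Finset (X j)} (hTY : T ⊆ Y j) (hT : T.Nonempty) (hTne : T ≠ Y j) :
    index Y (update C j (Y j \ T)) F = -index Y (update C j T) F := by
  rw [index_update, index_update, ← sum_neg_distrib]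
  refine sum_congr rfl fun A _ => ?_
  rw [indexCoeff_sdiff hTY hT hTne, neg_mul]

variable {π : Finset (X j) → Finset (Finset (X j))} {Yj : Finset (X j)}

lemma index_replaceAt (hF : IsProperSuit Y F) (hπ : IsFactorReplacement (Y j) Yj π)
    (W : Finset (X j)) :
    index (update Y j Yj) (update C j W) (replaceAt j π F) =
      ∑ A ∈ F, (∑ T ∈ π (A j), indexCoeff Yj W T) * offCoeff Y C j A := by
  rw [index_update_update, replaceAt, sum_biUnion (pairwiseDisjoint_image_update hF hπ)]
  refine sum_congr rfl fun A _ => ?_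
  rw [sum_image fun _ _ _ _ h => update_injective A j h, sum_mul]
  exact sum_congr rfl fun T _ => by rw [update_self, offCoeff_update]

lemma index_replaceAt_erasePieces (hF : IsProperSuit Y F) {z w : X j} (hz : z ∈ Y j)
    (hw : w ∈ (Y j).erase z) (hw' : (((Y j).erase z).erase w).Nonempty) {W : Finset (X j)}
    (hW : W ⊆ (Y j).erase z) (hWne : W.Nonempty) :
    index (update Y j ((Y j).erase z)) (update C j W) (replaceAt j (erasePieces (Y j) z w) F) =
      index Y (update C j W) F + index Y (update C j (insert z W)) F := by
  rw [index_replaceAt hF (isFactorReplacement_erasePieces hz hw hw'), index_update, index_update,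
    ← sum_add_distrib]
  exact sum_congr rfl fun A _ => by rw [sum_erasePieces hz hw hW hWne, add_mul]

lemma index_flipAt_update (hF : IsProperSuit Y F) (T : Finset (X j)) :
    index Y (update C j T) (flipAt Y j F) =
      ∑ A ∈ F, indexCoeff (Y j) T (Y j \ A j) * offCoeff Y C j A := by
  have h := index_replaceAt (C := C) hF (isFactorReplacement_sdiff (Y := Y j)) T
  rw [update_eq_self] at h
  simp only [flipAt, h, sum_singleton]

lemma index_flipAt_self (hF : IsProperSuit Y F) :
    index Y (update C j (Y j)) (flipAt Y j F) = index Y (update C j (Y j)) F := by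
  rw [index_flipAt_update hF, index_update]
  refine sum_congr rfl fun A hA => ?_
  obtain ⟨-, hne, hneY⟩ := isFactorReplacement_sdiff.proper _ (hF.subset A hA j)
    (hF.nonempty A hA j) (hF.ne A hA j) _ (mem_singleton_self _)
  rw [indexCoeff_self_of_ne hne hneY, indexCoeff_self_of_ne (hF.nonempty A hA j) (hF.ne A hA j)]

lemma index_flipAt (hF : IsProperSuit Y F) {T : Finset (X j)} (hTY : T ⊆ Y j) (hT : T.Nonempty)
    (hTne : T ≠ Y j) :
    index Y (update C j T) (flipAt Y j F) = index Y (update C j (Y j \ T)) F := by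
  rw [index_flipAt_update hF, index_update]
  exact sum_congr rfl fun A hA => by rw [indexCoeff_sdiff_sdiff (hF.subset A hA j) hTY hT hTne]

lemma index_sliceAt (hF : IsProperSuit Y F) (y : X j) :
    index (fun i : {i // i ≠ j} => Y i) (fun i => C i) (sliceAt j y F) =
      ∑ A ∈ F with y ∈ A j, offCoeff Y C j A := by
  have hinj : Set.InjOn (fun (A : ∀ i, Finset (X i)) (i : {i // i ≠ j}) => A i)
      ↑(F.filter fun A => y ∈ A j) := by
    intro A hA B hB h
    rw [coe_filter] at hA hB
    by_contra hAB
    have hAj := hF.eq_sdiff_of_not_disjoint (j := j) hA.1 hB.1 hAB fun i hij => by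
      rw [show A i = B i from congrFun h ⟨i, hij⟩, disjoint_self]
      exact (hF.nonempty B hB.1 i).ne_empty
    exact (mem_sdiff.mp (hAj ▸ hA.2)).2 hB.2
  rw [index, sliceAt, sum_image hinj]
  exact sum_congr rfl fun A _ =>
    (prod_subtype (univ.erase j) (fun i => by simp) (fun i => indexCoeff (Y i) (C i) (A i))).symm

end Index

section Forward

def PolyboxDeterminesIndex {ι : Type*} [Fintype ι] [DecidableEq ι] {X : ι → Type*}
    [∀ i, DecidableEq (X i)] (Y : ∀ i, Finset (X i)) : Prop :=
  ∀ F G, IsProperSuit Y F → IsProperSuit Y G → polybox F = polybox G →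
    ∀ C : ∀ i, Finset (X i), (∀ i, C i ⊆ Y i) → (∀ i, (C i).Nonempty) →
      index Y C F = index Y C G

lemma eq_of_polybox_eq_of_isEmpty {ι : Type*} [IsEmpty ι] {X : ι → Type*}
    {F G : Finset (∀ i, Finset (X i))} (h : polybox F = polybox G) : F = G := by
  have key : ∀ {F G : Finset (∀ i, Finset (X i))}, polybox F = polybox G → F ⊆ G := by
    intro F G h A hA
    obtain ⟨B, hB, -⟩ : (isEmptyElim : ∀ i, X i) ∈ polybox G := h ▸ ⟨A, hA, isEmptyElim⟩
    rwa [Subsingleton.elim A B]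
  exact (key h).antisymm (key h.symm)

variable {ι : Type*} [Fintype ι] [DecidableEq ι] {X : ι → Type*} [∀ i, DecidableEq (X i)]
  {Y : ∀ i, Finset (X i)} {j : ι}

lemma polyboxDeterminesIndex_of_isEmpty [IsEmpty ι] : PolyboxDeterminesIndex Y :=
  fun _ _ _ _ h _ _ _ => by rw [eq_of_polybox_eq_of_isEmpty h]

lemma polyboxDeterminesIndex_of_card_le_one (hY : (Y j).card ≤ 1) : PolyboxDeterminesIndex Y :=
  fun _ _ hF hG _ _ _ _ => by rw [hF.eq_empty_of_card_le_one hY, hG.eq_empty_of_card_le_one hY]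

lemma index_eq_of_eq_pair {F : Finset (∀ i, Finset (X i))} (hF : IsProperSuit Y F)
    {C : ∀ i, Finset (X i)} {a b : X j} (hab : a ≠ b) (hY : Y j = {a, b}) :
    index Y C F = indexCoeff (Y j) (C j) {a} * ∑ A ∈ F with a ∈ A j, offCoeff Y C j A +
      indexCoeff (Y j) (C j) {b} * ∑ A ∈ F with b ∈ A j, offCoeff Y C j A := by
  have hAj : ∀ A ∈ F, A j = {a} ∨ A j = {b} := fun A hA =>
    eq_singleton_or_eq_singleton_of_subset_pair (hY ▸ hF.subset A hA j) (hF.nonempty A hA j)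
      (hY ▸ hF.ne A hA j)
  have hb : ∀ A ∈ F, a ∉ A j ↔ b ∈ A j := fun A hA => by
    rcases hAj A hA with h | h <;> simp [h, hab, hab.symm]
  rw [index_eq_sum_offCoeff j, ← sum_filter_add_sum_filter_not F (fun A => a ∈ A j),
    filter_congr hb, mul_sum, mul_sum]
  congr 1 <;> refine sum_congr rfl fun A hA => ?_
  · obtain ⟨hA, haA⟩ := mem_filter.mp hA
    have : A j = {a} := (hAj A hA).resolve_right fun h => hab (by simpa [h] using haA)
    rw [this]
  · obtain ⟨hA, hbA⟩ := mem_filter.mp hA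
    have : A j = {b} := (hAj A hA).resolve_left fun h => hab.symm (by simpa [h] using hbA)
    rw [this]

lemma polyboxDeterminesIndex_of_card_eq_two (hY : (Y j).card = 2)
    (h : PolyboxDeterminesIndex fun i : {i // i ≠ j} => Y i) : PolyboxDeterminesIndex Y := by
  intro F G hF hG hFG C hCY hC
  obtain ⟨a, b, hab, hYab⟩ := card_eq_two.mp hY
  have hslice : ∀ y : X j, ∑ A ∈ F with y ∈ A j, offCoeff Y C j A =
      ∑ A ∈ G with y ∈ A j, offCoeff Y C j A := fun y => by
    rw [← index_sliceAt hF, ← index_sliceAt hG]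
    refine h _ _ hF.sliceAt hG.sliceAt ?_ _ (fun i => hCY i) (fun i => hC i)
    ext u
    rw [mem_polybox_sliceAt, mem_polybox_sliceAt, hFG]
  rw [index_eq_of_eq_pair hF hab hYab, index_eq_of_eq_pair hG hab hYab, hslice a, hslice b]

lemma index_add_index_insert_eq (hY : 3 ≤ (Y j).card)
    (h : ∀ z ∈ Y j, PolyboxDeterminesIndex (update Y j ((Y j).erase z)))
    {F G : Finset (∀ i, Finset (X i))} (hF : IsProperSuit Y F) (hG : IsProperSuit Y G)
    (hFG : polybox F = polybox G) {C : ∀ i, Finset (X i)} (hCY : ∀ i, C i ⊆ Y i)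
    (hC : ∀ i, (C i).Nonempty) {z : X j} (hz : z ∈ Y j) {W : Finset (X j)}
    (hW : W ⊆ (Y j).erase z) (hWne : W.Nonempty) :
    index Y (update C j W) F + index Y (update C j (insert z W)) F =
      index Y (update C j W) G + index Y (update C j (insert z W)) G := by
  have hcard : ((Y j).erase z).card = (Y j).card - 1 := card_erase_of_mem hz
  obtain ⟨w, hw⟩ : ((Y j).erase z).Nonempty := card_pos.mp (by omega)
  have hw' : (((Y j).erase z).erase w).Nonempty := by
    rw [← card_pos, card_erase_of_mem hw]; omega
  have hπ := isFactorReplacement_erasePieces hz hw hw'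
  rw [← index_replaceAt_erasePieces hF hz hw hw' hW hWne,
    ← index_replaceAt_erasePieces hG hz hw hw' hW hWne]
  refine h z hz _ _ (hF.replaceAt hπ) (hG.replaceAt hπ)
    (by rw [polybox_replaceAt_erasePieces hw, polybox_replaceAt_erasePieces hw, hFG]) _
    (fun i => ?_) (fun i => ?_) <;> rcases eq_or_ne i j with rfl | hij
  · simpa using hW
  · simpa [hij] using hCY i
  · simpa using hWne
  · simpa [hij] using hC i

lemma polyboxDeterminesIndex_of_erase (hY : 3 ≤ (Y j).card)
    (h : ∀ z ∈ Y j, PolyboxDeterminesIndex (update Y j ((Y j).erase z))) :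
    PolyboxDeterminesIndex Y := by
  intro F G hF hG hFG C hCY hC
  have hsingle : ∀ z ∈ Y j, index Y (update C j {z}) F = index Y (update C j {z}) G := by
    intro z hz
    have hz' : (Y j).erase z ≠ Y j := (erase_ssubset hz).ne
    have hz1 : {z} ≠ Y j := fun e => by rw [← e, card_singleton] at hY; omega
    have hne : ((Y j).erase z).Nonempty := by rw [← card_pos, card_erase_of_mem hz]; omega
    have h₁ := index_add_index_insert_eq hY h hF hG hFG hCY hC hz subset_rfl hne
    have h₂ := index_add_index_insert_eq hY h (hF.flipAt j) (hG.flipAt j)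
      (polybox_flipAt_congr hF hG hFG) hCY hC hz subset_rfl hne
    rw [insert_erase hz] at h₁ h₂
    rw [index_flipAt hF (erase_subset z _) hne hz', index_flipAt hG (erase_subset z _) hne hz',
      index_flipAt_self hF, index_flipAt_self hG, sdiff_erase_self hz] at h₂
    rw [← sdiff_singleton_eq_erase, index_update_sdiff (singleton_subset_iff.mpr hz)
      (singleton_nonempty z) hz1, index_update_sdiff (singleton_subset_iff.mpr hz)
      (singleton_nonempty z) hz1] at h₁
    linarith
  have hD := eq_zero_of_add_insert_eq_zero
    (D := fun T => index Y (update C j T) F - index Y (update C j T) G)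
    (fun z hz => sub_eq_zero.mpr (hsingle z hz))
    (fun z hz W hW hWne => sub_add_sub_comm (index Y (update C j W) F) _ _ _ ▸
      sub_eq_zero.mpr (index_add_index_insert_eq hY h hF hG hFG hCY hC hz hW hWne))
    (hCY j) (hC j)
  simpa [sub_eq_zero] using hD

end Forward

theorem polyboxDeterminesIndex {ι : Type*} [Fintype ι] [DecidableEq ι] {X : ι → Type*}
    [∀ i, DecidableEq (X i)] (Y : ∀ i, Finset (X i)) : PolyboxDeterminesIndex Y := by
  induction hd : Fintype.card ι using Nat.strong_induction_on generalizing ι with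
  | _ d ih =>
  rcases isEmpty_or_nonempty ι with hι | ⟨⟨j⟩⟩
  · exact polyboxDeterminesIndex_of_isEmpty
  have hslice : ∀ Y : ∀ i, Finset (X i), PolyboxDeterminesIndex fun i : {i // i ≠ j} => Y i :=
    fun Y => ih _ (hd ▸ Fintype.card_subtype_lt (p := (· ≠ j)) (not_not.mpr rfl)) _ rfl
  induction hn : (Y j).card using Nat.strong_induction_on generalizing Y with
  | _ n ihn =>
  rcases lt_trichotomy n 2 with hn2 | hn2 | hn2
  · exact polyboxDeterminesIndex_of_card_le_one (j := j) (by omega)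
  · exact polyboxDeterminesIndex_of_card_eq_two (hn.trans hn2) (hslice Y)
  refine polyboxDeterminesIndex_of_erase (j := j) (by omega) fun z hz => ihn _ ?_ _ rfl
  rw [update_self, card_erase_of_mem hz]
  omega

section Backward

lemma sum_indexCoeff_univ {α : Type*} [Fintype α] [DecidableEq α] (S : Finset α) (x : α) :
    ∑ T ∈ univ.filter (x ∈ ·), indexCoeff univ T S = if x ∈ S then 2 else 0 := by
  have hcompl : ∀ T : Finset α, S = univ \ T ↔ univ \ S = T := fun T =>
    eq_comm.trans (sdiff_eq_comm (subset_univ S) (subset_univ T)).symm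
  simp only [indexCoeff, sum_add_distrib, sum_sub_distrib, hcompl, sum_ite_eq, sum_ite_eq',
    mem_filter, mem_univ, true_and, mem_sdiff]
  split_ifs <;> simp_all

variable {ι : Type*} [Fintype ι] [DecidableEq ι] {X : ι → Type*} [∀ i, Fintype (X i)]
  [∀ i, DecidableEq (X i)]

lemma sum_index_eq_card (F : Finset (∀ i, Finset (X i))) (x : ∀ i, X i) :
    ∑ C ∈ Fintype.piFinset (fun i => univ.filter (x i ∈ ·)), index (fun _ => univ) C F =
      2 ^ Fintype.card ι * #{A ∈ F | ∀ i, x i ∈ A i} := by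
  simp only [index]
  rw [sum_comm, card_eq_sum_ones, Nat.cast_sum, sum_filter, mul_sum]
  refine sum_congr rfl fun A _ => ?_
  rw [← prod_univ_sum (fun i => univ.filter (x i ∈ ·)) (fun i T => indexCoeff univ T (A i)),
    prod_congr rfl fun i _ => sum_indexCoeff_univ (A i) (x i), prod_ite_zero]
  simp

theorem polybox_eq_of_index_eq {F G : Finset (∀ i, Finset (X i))}
    (h : ∀ C : ∀ i, Finset (X i), (∀ i, (C i).Nonempty) →
      index (fun _ => univ) C F = index (fun _ => univ) C G) :
    polybox F = polybox G := by
  have hcard : ∀ x : ∀ i, X i, #{A ∈ F | ∀ i, x i ∈ A i} = #{A ∈ G | ∀ i, x i ∈ A i} := by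
    intro x
    have := sum_index_eq_card F x
    rw [sum_congr rfl fun C hC => h C fun i => ⟨x i, by simpa using Fintype.mem_piFinset.mp hC i⟩,
      sum_index_eq_card G x] at this
    exact_mod_cast (mul_right_injective₀ (by positivity : (2 : ℤ) ^ Fintype.card ι ≠ 0) this).symm
  ext x
  have := hcard x
  simp only [polybox, Set.mem_ofPred_eq, ← filter_nonempty_iff, ← card_pos, this]

end Backward

end Polybox

theorem stmt_17_general {d : ℕ} (X : Fin d → Type*) [∀ i, Fintype (X i)] [∀ i, DecidableEq (X i)]
    (𝓕 𝓖 : Finset (∀ i, Finset (X i)))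
    (h𝓕p : ∀ A ∈ 𝓕, ∀ i, (A i).Nonempty ∧ A i ≠ Finset.univ)
    (h𝓖p : ∀ A ∈ 𝓖, ∀ i, (A i).Nonempty ∧ A i ≠ Finset.univ)
    (h𝓕d : ∀ A ∈ 𝓕, ∀ B ∈ 𝓕, A ≠ B → ∃ i, A i = (B i)ᶜ)
    (h𝓖d : ∀ A ∈ 𝓖, ∀ B ∈ 𝓖, A ≠ B → ∃ i, A i = (B i)ᶜ) :
    ({x : ∀ i, X i | ∃ A ∈ 𝓕, ∀ i, x i ∈ A i}
        = {x : ∀ i, X i | ∃ A ∈ 𝓖, ∀ i, x i ∈ A i}) ↔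
      ∀ C : ∀ i, Finset (X i), (∀ i, (C i).Nonempty) →
        (∑ A ∈ 𝓕, ∏ i,
          ((if A i = C i then (1 : ℤ) else 0) - (if A i = (C i)ᶜ then 1 else 0)
            + (if C i = Finset.univ then 1 else 0)))
        = (∑ A ∈ 𝓖, ∏ i,
          ((if A i = C i then (1 : ℤ) else 0) - (if A i = (C i)ᶜ then 1 else 0)
            + (if C i = Finset.univ then 1 else 0))) := by
  have hsuit : ∀ H : Finset (∀ i, Finset (X i)), (∀ A ∈ H, ∀ i, (A i).Nonempty ∧ A i ≠ univ) →
      (∀ A ∈ H, ∀ B ∈ H, A ≠ B → ∃ i, A i = (B i)ᶜ) → Polybox.IsProperSuit (fun _ => univ) H :=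
    fun H hp hd => ⟨fun _ _ _ => subset_univ _, fun A hA i => (hp A hA i).1,
      fun A hA i => (hp A hA i).2, by simpa only [compl_eq_univ_sdiff] using hd⟩
  -- For finsets, `sᶜ` unfolds to `univ \ s`.
  change Polybox.polybox 𝓕 = Polybox.polybox 𝓖 ↔
    ∀ C : ∀ i, Finset (X i), (∀ i, (C i).Nonempty) →
      Polybox.index (fun _ => univ) C 𝓕 = Polybox.index (fun _ => univ) C 𝓖
  exact ⟨fun h C hC => Polybox.polyboxDeterminesIndex _ 𝓕 𝓖 (hsuit 𝓕 h𝓕p h𝓕d)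
    (hsuit 𝓖 h𝓖p h𝓖d) h C (fun _ => subset_univ _) hC, Polybox.polybox_eq_of_index_eq⟩

/-- two polyboxes `F`, `G` (given by proper suits `𝓕`, `𝓖`) are equal
iff their indices relative to every box `C` (with nonempty factors, possibly improper)
coincide. -/
theorem stmt_17 {d : ℕ} (X : Fin d → Type*) [∀ i, Fintype (X i)] [∀ i, DecidableEq (X i)]
    (hX : ∀ i, 2 ≤ Fintype.card (X i))
    (𝓕 𝓖 : Finset (∀ i, Finset (X i)))
    (h𝓕p : ∀ A ∈ 𝓕, ∀ i, (A i).Nonempty ∧ A i ≠ Finset.univ)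
    (h𝓖p : ∀ A ∈ 𝓖, ∀ i, (A i).Nonempty ∧ A i ≠ Finset.univ)
    (h𝓕d : ∀ A ∈ 𝓕, ∀ B ∈ 𝓕, A ≠ B → ∃ i, A i = (B i)ᶜ)
    (h𝓖d : ∀ A ∈ 𝓖, ∀ B ∈ 𝓖, A ≠ B → ∃ i, A i = (B i)ᶜ) :
    ({x : ∀ i, X i | ∃ A ∈ 𝓕, ∀ i, x i ∈ A i}
        = {x : ∀ i, X i | ∃ A ∈ 𝓖, ∀ i, x i ∈ A i}) ↔
      ∀ C : ∀ i, Finset (X i), (∀ i, (C i).Nonempty) →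
        (∑ A ∈ 𝓕, ∏ i,
          ((if A i = C i then (1 : ℤ) else 0) - (if A i = (C i)ᶜ then 1 else 0)
            + (if C i = Finset.univ then 1 else 0)))
        = (∑ A ∈ 𝓖, ∏ i,
          ((if A i = C i then (1 : ℤ) else 0) - (if A i = (C i)ᶜ then 1 else 0)
            + (if C i = Finset.univ then 1 else 0))) :=
  stmt_17_general X 𝓕 𝓖 h𝓕p h𝓖p h𝓕d h𝓖d
end

section
/- Let S be an alphabet with a complementation s ↦ s' (an involution without fixed points). Let v ∈ S^d be a word, W ⊆ S^d a set of pairwise dichotomous words (a genome), and define g(v,w) = Π_{i=1}^d (2·[v_i = w_i] + [v_i ∉ {w_i, w_i'}]). Then Σ_{w∈W} g(v,w) ≤ 2^d. -/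
/-!
Orient the alphabet by a map `r : S → Bool` with `r s' ≠ r s`. A word `w` then determines the
subcube of `{0,1}^d` whose `i`-th coordinate is free when `vᵢ = wᵢ`, is `r wᵢ` when
`vᵢ ∉ {wᵢ, wᵢ'}`, and is impossible when `vᵢ = wᵢ'`; its size is exactly `g(v,w)`. Two
dichotomous words `u, w` with `uᵢ = wᵢ'` have disjoint subcubes, as their `i`-th coordinate
sets are disjoint, so the sizes add up to at most `2^d`.
-/

open Finset Fintype

lemma exists_orientation {S : Type*} {c : S → S} (hinv : ∀ s, c (c s) = s) (hfix : ∀ s, c s ≠ s) :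
    ∃ r : S → Bool, ∀ s, r (c s) ≠ r s := by
  let : LinearOrder S := WellOrderingRel.isWellOrder.linearOrder
  refine ⟨fun s => decide (s < c s), fun s => ?_⟩
  simp only [hinv]
  rcases lt_or_gt_of_ne (hfix s) with h | h <;> simp [h, h.not_gt]

section Cube

variable {S : Type*} [DecidableEq S] (r : S → Bool) (c : S → S)

def letterCube (a b : S) : Finset Bool :=
  if a = b then univ else if a = c b then ∅ else {r b}

lemma card_letterCube (a b : S) :
    #(letterCube r c a b) = 2 * (if a = b then 1 else 0) + (if a ≠ b ∧ a ≠ c b then 1 else 0) := by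
  unfold letterCube
  split_ifs <;> simp_all

variable {r c}

lemma disjoint_letterCube_compl (hinv : ∀ s, c (c s) = s) (hr : ∀ s, r (c s) ≠ r s)
    (a b : S) : Disjoint (letterCube r c a b) (letterCube r c a (c b)) := by
  have hfix : c b ≠ b := fun h => hr b (congrArg r h)
  unfold letterCube
  by_cases hab : a = b
  · subst hab; simp [hfix.symm, hinv]
  by_cases hac : a = c b
  · simp [hac, hfix]
  simp [hab, hac, hinv, (hr b).symm]

variable (r c) {ι : Type*} [Fintype ι] [DecidableEq ι]

def wordCube (v w : ι → S) : Finset (ι → Bool) :=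
  piFinset fun i => letterCube r c (v i) (w i)

variable {r c}

lemma disjoint_wordCube (hinv : ∀ s, c (c s) = s) (hr : ∀ s, r (c s) ≠ r s)
    (v : ι → S) {u w : ι → S} {i : ι} (hi : u i = c (w i)) :
    Disjoint (wordCube r c v u) (wordCube r c v w) :=
  piFinset_disjoint_of_disjoint _ _ (a := i) <| by
    rw [hi]
    exact (disjoint_letterCube_compl hinv hr (v i) (w i)).symm

lemma sum_card_wordCube_le (hinv : ∀ s, c (c s) = s) (hr : ∀ s, r (c s) ≠ r s)
    (v : ι → S) (W : Finset (ι → S)) (hW : ∀ u ∈ W, ∀ w ∈ W, u ≠ w → ∃ i, u i = c (w i)) :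
    ∑ w ∈ W, #(wordCube r c v w) ≤ 2 ^ Fintype.card ι := by
  have hdisj : (W : Set (ι → S)).PairwiseDisjoint (wordCube r c v) := by
    intro u hu w hw huw
    obtain ⟨i, hi⟩ := hW u hu w hw huw
    exact disjoint_wordCube hinv hr v hi
  rw [← card_biUnion hdisj]
  simpa using card_le_univ (W.biUnion (wordCube r c v))

end Cube

/-- for an alphabet with a fixed-point-free involutive complementation,
a word `v` and a genome `W` (a finite set of pairwise dichotomous words),
`∑_{w ∈ W} g(v,w) ≤ 2^d`, where `g(v,w) = ∏ᵢ (2·[vᵢ = wᵢ] + [vᵢ ∉ {wᵢ, wᵢ'}])`. -/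
theorem stmt_18 (S : Type*) [DecidableEq S] (c : S → S)
    (hinv : ∀ s, c (c s) = s) (hfix : ∀ s, c s ≠ s)
    {d : ℕ} (v : Fin d → S) (W : Finset (Fin d → S))
    (hW : ∀ u ∈ W, ∀ w ∈ W, u ≠ w → ∃ i, u i = c (w i)) :
    (∑ w ∈ W, ∏ i,
        (2 * (if v i = w i then 1 else 0)
          + (if v i ≠ w i ∧ v i ≠ c (w i) then 1 else 0))) ≤ 2 ^ d := by
  obtain ⟨r, hr⟩ := exists_orientation hinv hfix
  simpa [wordCube, card_piFinset, card_letterCube] using sum_card_wordCube_le hinv hr v W hW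
end

section
/- Let S be an alphabet with a fixed-point-free involution s ↦ s', and let W ⊆ S^d be a genome (a set of pairwise dichotomous words) with |W| = 2^d. Suppose W = W⁺ ∪ W⁻ is an induced decomposition (for each w ∈ W an orientation of the class C_w = {w^ε : ε ∈ {0,1}^d} is chosen, with W⁺ and W⁻ the words falling into the positive and negative parts respectively). If v ∈ S^d is a word dichotomous to every word of W⁺, then v ∈ W⁻. -/
set_option linter.unusedSectionVars false
set_option maxHeartbeats 1000000

open Finset

namespace Stmt19

variable {S : Type*} [DecidableEq S]

def orbSetoid (c : S → S) (hinv : ∀ s, c (c s) = s) : Setoid S where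
  r s t := s = t ∨ s = c t
  iseqv := by
    refine ⟨fun s => Or.inl rfl, ?_, ?_⟩
    · rintro s t (rfl | rfl)
      · exact Or.inl rfl
      · exact Or.inr (hinv t).symm
    · rintro s t u (rfl | rfl) (h | h)
      · exact Or.inl h
      · exact Or.inr h
      · exact Or.inr (h ▸ rfl)
      · exact Or.inl (by rw [h, hinv])

noncomputable def rep (c : S → S) (hinv : ∀ s, c (c s) = s) (s : S) : S :=
  (@Quotient.mk S (orbSetoid c hinv) s).out

lemma rep_or (c : S → S) (hinv : ∀ s, c (c s) = s) (s : S) :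
    rep c hinv s = s ∨ rep c hinv s = c s :=
  @Quotient.mk_out S (orbSetoid c hinv) s

lemma rep_c (c : S → S) (hinv : ∀ s, c (c s) = s) (s : S) :
    rep c hinv (c s) = rep c hinv s := by
  unfold rep
  congr 1
  exact Quotient.sound (Or.inr rfl)

lemma orbit_of_rep_eq (c : S → S) (hinv : ∀ s, c (c s) = s) {s t : S}
    (h : rep c hinv s = rep c hinv t) : s = t ∨ s = c t := by
  rcases rep_or c hinv s with h1 | h1 <;> rcases rep_or c hinv t with h2 | h2
  · exact Or.inl (h1 ▸ h2 ▸ h)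
  · exact Or.inr (h1 ▸ h2 ▸ h)
  · refine Or.inr ?_
    have : c s = t := by rw [← h1, h, h2]
    rw [← this, hinv]
  · refine Or.inl ?_
    have : c s = c t := by rw [← h1, h, h2]
    have := congrArg c this
    rwa [hinv, hinv] at this

noncomputable def req (c : S → S) (hinv : ∀ s, c (c s) = s) (s : S) : Bool :=
  decide (rep c hinv s = s)

lemma req_c (c : S → S) (hinv : ∀ s, c (c s) = s) (hfix : ∀ s, c s ≠ s) (s : S) :
    req c hinv (c s) = !(req c hinv s) := by
  unfold req
  rw [rep_c]
  rcases rep_or c hinv s with h | h <;> rw [h] <;> simp [hfix s, Ne.symm (hfix s)]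

noncomputable def row {d : ℕ} (c : S → S) (hinv : ∀ s, c (c s) = s) (Rf : Finset S)
    (x : Fin d → ↥Rf → Bool) (i : Fin d) (s : S) : Bool :=
  if h : rep c hinv s ∈ Rf then x i ⟨rep c hinv s, h⟩ else true

lemma row_congr {d : ℕ} (c : S → S) (hinv : ∀ s, c (c s) = s) (Rf : Finset S)
    (x : Fin d → ↥Rf → Bool) (i : Fin d) {s t : S} (h : rep c hinv s = rep c hinv t) :
    row c hinv Rf x i s = row c hinv Rf x i t := by
  unfold row; rw [h]

lemma row_c {d : ℕ} (c : S → S) (hinv : ∀ s, c (c s) = s) (Rf : Finset S)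
    (x : Fin d → ↥Rf → Bool) (i : Fin d) (s : S) :
    row c hinv Rf x i (c s) = row c hinv Rf x i s :=
  row_congr c hinv Rf x i (rep_c c hinv s)

lemma row_eq {d : ℕ} (c : S → S) (hinv : ∀ s, c (c s) = s) (Rf : Finset S)
    (x : Fin d → ↥Rf → Bool) (i : Fin d) {s : S} (h : rep c hinv s ∈ Rf) :
    row c hinv Rf x i s = x i ⟨rep c hinv s, h⟩ :=
  dif_pos h

def Sel {d : ℕ} (c : S → S) (hinv : ∀ s, c (c s) = s) (Rf : Finset S)
    (x : Fin d → ↥Rf → Bool) (w : Fin d → S) : Prop :=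
  ∀ i, row c hinv Rf x i (w i) = req c hinv (w i)

lemma sel_conflict {d : ℕ} (c : S → S) (hinv : ∀ s, c (c s) = s) (hfix : ∀ s, c s ≠ s)
    (Rf : Finset S) {x : Fin d → ↥Rf → Bool} {u w : Fin d → S}
    (hu : Sel c hinv Rf x u) (hw : Sel c hinv Rf x w) {i : Fin d} (h : u i = c (w i)) :
    False := by
  have h1 := hu i
  have h2 := hw i
  rw [h, row_c, req_c c hinv hfix, h2] at h1
  simp at h1



lemma two_mul_card_row (κ : Type*) [DecidableEq κ] [Fintype κ] (k : κ) (b : Bool) :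
    2 * (Finset.univ.filter (fun y : κ → Bool => y k = b)).card = 2 ^ Fintype.card κ := by
  classical
  have hsplit := Finset.card_filter_add_card_filter_not
    (s := (Finset.univ : Finset (κ → Bool))) (p := fun y : κ → Bool => y k = b)
  have hbij : (Finset.univ.filter (fun y : κ → Bool => y k = b)).card
      = (Finset.univ.filter (fun y : κ → Bool => ¬ (y k = b))).card := by
    refine Finset.card_bij' (fun y _ => Function.update y k (!b))
      (fun y _ => Function.update y k b) ?_ ?_ ?_ ?_
    · intro y hy
      simp [Function.update_self]
    · intro y hy
      simp [Function.update_self]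
    · intro y hy
      simp only [Finset.mem_filter] at hy
      show Function.update (Function.update y k (!b)) k b = y
      rw [Function.update_idem, ← hy.2, Function.update_eq_self]
    · intro y hy
      simp only [Finset.mem_filter] at hy
      have hkb : y k = !b := by
        cases hb : y k <;> cases b <;> simp_all
      show Function.update (Function.update y k b) k (!b) = y
      rw [Function.update_idem, ← hkb, Function.update_eq_self]
  have hcard : (Finset.univ : Finset (κ → Bool)).card = 2 ^ Fintype.card κ := by
    rw [Finset.card_univ, Fintype.card_fun, Fintype.card_bool]
  rw [two_mul, ← hcard, ← hsplit]
  rw [hbij]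

lemma card_constrained {ι κ : Type*} [Fintype ι] [DecidableEq ι] [Fintype κ] [DecidableEq κ]
    (k : ι → κ) (b : ι → Bool) :
    2 ^ Fintype.card ι *
      (Finset.univ.filter (fun x : ι → κ → Bool => ∀ i, x i (k i) = b i)).card
      = 2 ^ (Fintype.card κ * Fintype.card ι) := by
  classical
  have h1 : (Finset.univ.filter (fun x : ι → κ → Bool => ∀ i, x i (k i) = b i)).card
      = Fintype.card {x : ι → κ → Bool // ∀ i, x i (k i) = b i} := by
    rw [Fintype.card_subtype]
  have h2 : Fintype.card {x : ι → κ → Bool // ∀ i, x i (k i) = b i}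
      = ∏ i : ι, Fintype.card {y : κ → Bool // y (k i) = b i} := by
    rw [Fintype.card_congr (Equiv.subtypePiEquivPi (p := fun i (y : κ → Bool) => y (k i) = b i))]
    rw [Fintype.card_pi]
  rw [h1, h2]
  have h3 : ∀ i : ι, 2 * Fintype.card {y : κ → Bool // y (k i) = b i} = 2 ^ Fintype.card κ := by
    intro i
    rw [Fintype.card_subtype]
    exact two_mul_card_row κ (k i) (b i)
  calc 2 ^ Fintype.card ι * ∏ i : ι, Fintype.card {y : κ → Bool // y (k i) = b i}
      = ∏ i : ι, (2 * Fintype.card {y : κ → Bool // y (k i) = b i}) := by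
        rw [Finset.prod_mul_distrib, Finset.prod_const, Finset.card_univ]
    _ = ∏ _i : ι, 2 ^ Fintype.card κ := by exact Finset.prod_congr rfl (fun i _ => h3 i)
    _ = 2 ^ (Fintype.card κ * Fintype.card ι) := by
        rw [Finset.prod_const, Finset.card_univ, ← pow_mul]


section
variable {S : Type*} [DecidableEq S]

lemma exists_sel (c : S → S) (hinv : ∀ s, c (c s) = s) (hfix : ∀ s, c s ≠ s)
    {d : ℕ} (W : Finset (Fin d → S)) (Rf : Finset S)
    (hW : ∀ u ∈ W, ∀ w ∈ W, u ≠ w → ∃ i, u i = c (w i))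
    (hcard : W.card = 2 ^ d)
    (hk : ∀ w ∈ W, ∀ i, rep c hinv (w i) ∈ Rf)
    (x : Fin d → ↥Rf → Bool) : ∃ w ∈ W, Sel c hinv Rf x w := by
  classical
  have hle : ∀ y : Fin d → ↥Rf → Bool,
      (W.filter (fun w => Sel c hinv Rf y w)).card ≤ 1 := by
    intro y
    refine Finset.card_le_one.mpr ?_
    intro a ha b hb
    simp only [Finset.mem_filter] at ha hb
    by_contra hne
    obtain ⟨i, hi⟩ := hW a ha.1 b hb.1 hne
    exact sel_conflict c hinv hfix Rf ha.2 hb.2 hi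
  have hNw : ∀ w ∈ W,
      2 ^ d * (Finset.univ.filter (fun y : Fin d → ↥Rf → Bool => Sel c hinv Rf y w)).card
      = 2 ^ (Rf.card * d) := by
    intro w hw
    have hfe : Finset.univ.filter (fun y : Fin d → ↥Rf → Bool => Sel c hinv Rf y w)
        = Finset.univ.filter (fun y : Fin d → ↥Rf → Bool =>
            ∀ i, y i ⟨rep c hinv (w i), hk w hw i⟩ = req c hinv (w i)) := by
      apply Finset.filter_congr
      intro y _
      unfold Sel
      constructor
      · intro h i
        have := h i
        rwa [row_eq c hinv Rf y i (hk w hw i)] at this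
      · intro h i
        rw [row_eq c hinv Rf y i (hk w hw i)]
        exact h i
    rw [hfe]
    have hcc := card_constrained (ι := Fin d) (κ := ↥Rf)
      (fun i => (⟨rep c hinv (w i), hk w hw i⟩ : ↥Rf)) (fun i => req c hinv (w i))
    rw [Fintype.card_fin, Fintype.card_coe] at hcc
    convert hcc using 4
  have hswap : ∑ y : Fin d → ↥Rf → Bool, (W.filter (fun w => Sel c hinv Rf y w)).card
      = ∑ w ∈ W, (Finset.univ.filter (fun y : Fin d → ↥Rf → Bool => Sel c hinv Rf y w)).card := by
    simp only [Finset.card_filter]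
    rw [Finset.sum_comm]
  have htot : 2 ^ d * ∑ y : Fin d → ↥Rf → Bool, (W.filter (fun w => Sel c hinv Rf y w)).card
      = 2 ^ d * 2 ^ (Rf.card * d) := by
    rw [hswap, Finset.mul_sum, Finset.sum_congr rfl hNw, Finset.sum_const, hcard,
      smul_eq_mul]
  have hsum : ∑ y : Fin d → ↥Rf → Bool, (W.filter (fun w => Sel c hinv Rf y w)).card
      = 2 ^ (Rf.card * d) :=
    Nat.eq_of_mul_eq_mul_left (by positivity) htot
  have hXcard : (Finset.univ : Finset (Fin d → ↥Rf → Bool)).card = 2 ^ (Rf.card * d) := by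
    rw [Finset.card_univ, Fintype.card_fun, Fintype.card_fun, Fintype.card_bool,
      Fintype.card_coe, Fintype.card_fin, ← pow_mul]
  have h1 : ∀ y : Fin d → ↥Rf → Bool, (W.filter (fun w => Sel c hinv Rf y w)).card = 1 := by
    have hiff := (Finset.sum_eq_sum_iff_of_le (s := (Finset.univ : Finset (Fin d → ↥Rf → Bool)))
      (f := fun y => (W.filter (fun w => Sel c hinv Rf y w)).card)
      (g := fun _ => 1) (fun y _ => hle y))
    have heq : ∑ y : Fin d → ↥Rf → Bool, (W.filter (fun w => Sel c hinv Rf y w)).card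
        = ∑ _y : Fin d → ↥Rf → Bool, 1 := by
      rw [hsum, Finset.sum_const, smul_eq_mul, mul_one, hXcard]
    intro y
    exact hiff.mp heq y (Finset.mem_univ y)
  obtain ⟨w, hw⟩ := Finset.card_pos.mp (by rw [h1 x]; norm_num)
  simp only [Finset.mem_filter] at hw
  exact ⟨w, hw.1, hw.2⟩

end

----------------------------------------------------------------
-- toggle
----------------------------------------------------------------

def toggle {d : ℕ} {κ : Type*} [DecidableEq κ] (i0 : Fin d) (k0 : κ)
    (x : Fin d → κ → Bool) : Fin d → κ → Bool :=
  Function.update x i0 (Function.update (x i0) k0 (!(x i0 k0)))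

lemma toggle_row_ne {d : ℕ} {κ : Type*} [DecidableEq κ] (i0 : Fin d) (k0 : κ)
    (x : Fin d → κ → Bool) {i : Fin d} (h : i ≠ i0) : toggle i0 k0 x i = x i :=
  Function.update_of_ne h _ _

lemma toggle_key {d : ℕ} {κ : Type*} [DecidableEq κ] (i0 : Fin d) (k0 : κ)
    (x : Fin d → κ → Bool) : toggle i0 k0 x i0 k0 = !(x i0 k0) := by
  unfold toggle
  rw [Function.update_self, Function.update_self]

lemma toggle_key_ne {d : ℕ} {κ : Type*} [DecidableEq κ] (i0 : Fin d) (k0 : κ)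
    (x : Fin d → κ → Bool) {k : κ} (h : k ≠ k0) : toggle i0 k0 x i0 k = x i0 k := by
  unfold toggle
  rw [Function.update_self, Function.update_of_ne h]

lemma toggle_toggle {d : ℕ} {κ : Type*} [DecidableEq κ] (i0 : Fin d) (k0 : κ)
    (x : Fin d → κ → Bool) : toggle i0 k0 (toggle i0 k0 x) = x := by
  funext i k
  by_cases hi : i = i0
  · subst hi
    by_cases hk : k = k0
    · subst hk
      rw [toggle_key, toggle_key, Bool.not_not]
    · rw [toggle_key_ne _ _ _ hk, toggle_key_ne _ _ _ hk]
  · rw [toggle_row_ne _ _ _ hi, toggle_row_ne _ _ _ hi]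

lemma toggle_ne {d : ℕ} {κ : Type*} [DecidableEq κ] (i0 : Fin d) (k0 : κ)
    (x : Fin d → κ → Bool) : toggle i0 k0 x ≠ x := by
  intro h
  have := congrFun (congrFun h i0) k0
  rw [toggle_key] at this
  cases hb : x i0 k0 <;> rw [hb] at this <;> simp at this

lemma row_toggle_ne {d : ℕ} (c : S → S) (hinv : ∀ s, c (c s) = s) (Rf : Finset S)
    (i0 : Fin d) (k0 : ↥Rf) (x : Fin d → ↥Rf → Bool) {i : Fin d} (h : i ≠ i0) (s : S) :
    row c hinv Rf (toggle i0 k0 x) i s = row c hinv Rf x i s := by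
  unfold row
  rw [toggle_row_ne _ _ _ h]

lemma row_toggle_diag_ne {d : ℕ} (c : S → S) (hinv : ∀ s, c (c s) = s) (Rf : Finset S)
    (i0 : Fin d) (k0 : ↥Rf) (x : Fin d → ↥Rf → Bool) {s : S}
    (h : rep c hinv s ≠ (k0 : S)) :
    row c hinv Rf (toggle i0 k0 x) i0 s = row c hinv Rf x i0 s := by
  unfold row
  split
  · next hm =>
    exact toggle_key_ne _ _ _ (fun he => h (congrArg Subtype.val he))
  · rfl

lemma row_toggle_diag {d : ℕ} (c : S → S) (hinv : ∀ s, c (c s) = s) (Rf : Finset S)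
    (i0 : Fin d) (k0 : ↥Rf) (x : Fin d → ↥Rf → Bool) {s : S}
    (hm : rep c hinv s ∈ Rf) (h : rep c hinv s = (k0 : S)) :
    row c hinv Rf (toggle i0 k0 x) i0 s = !(row c hinv Rf x i0 s) := by
  unfold row
  rw [dif_pos hm, dif_pos hm]
  have he : (⟨rep c hinv s, hm⟩ : ↥Rf) = k0 := Subtype.ext h
  rw [he, toggle_key]

----------------------------------------------------------------
-- chi and the vanishing of toggle-closed sums
----------------------------------------------------------------

noncomputable def chi {d : ℕ} (c : S → S) (hinv : ∀ s, c (c s) = s) (Rf : Finset S)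
    (D0 : Finset (Fin d)) (wstar : Fin d → S) (x : Fin d → ↥Rf → Bool) : ℤ :=
  ∏ i ∈ D0, if row c hinv Rf x i (wstar i) = true then 1 else -1

lemma chi_toggle {d : ℕ} (c : S → S) (hinv : ∀ s, c (c s) = s) (Rf : Finset S)
    (D0 : Finset (Fin d)) (wstar : Fin d → S) {i0 : Fin d} (hi0 : i0 ∈ D0) (k0 : ↥Rf)
    (hm : rep c hinv (wstar i0) ∈ Rf) (hk : rep c hinv (wstar i0) = (k0 : S))
    (x : Fin d → ↥Rf → Bool) :
    chi c hinv Rf D0 wstar (toggle i0 k0 x) = - chi c hinv Rf D0 wstar x := by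
  unfold chi
  rw [← Finset.mul_prod_erase _ _ hi0, ← Finset.mul_prod_erase _ _ hi0]
  have h1 : ∏ i ∈ D0.erase i0,
      (if row c hinv Rf (toggle i0 k0 x) i (wstar i) = true then (1:ℤ) else -1)
      = ∏ i ∈ D0.erase i0, (if row c hinv Rf x i (wstar i) = true then (1:ℤ) else -1) := by
    refine Finset.prod_congr rfl (fun i hi => ?_)
    rw [row_toggle_ne c hinv Rf i0 k0 x (Finset.ne_of_mem_erase hi)]
  rw [h1, row_toggle_diag c hinv Rf i0 k0 x hm hk, ← neg_mul]
  congr 1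
  cases hb : row c hinv Rf x i0 (wstar i0) <;> simp [hb]

lemma sum_chi_zero {d : ℕ} (c : S → S) (hinv : ∀ s, c (c s) = s) (Rf : Finset S)
    (D0 : Finset (Fin d)) (wstar : Fin d → S) {i0 : Fin d} (hi0 : i0 ∈ D0) (k0 : ↥Rf)
    (hm : rep c hinv (wstar i0) ∈ Rf) (hk : rep c hinv (wstar i0) = (k0 : S))
    (T : Finset (Fin d → ↥Rf → Bool)) (hT : ∀ x ∈ T, toggle i0 k0 x ∈ T) :
    ∑ x ∈ T, chi c hinv Rf D0 wstar x = 0 := by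
  refine Finset.sum_involution (fun x _ => toggle i0 k0 x) ?_ ?_ hT ?_
  · intro x hx
    rw [chi_toggle c hinv Rf D0 wstar hi0 k0 hm hk]
    ring
  · intro x hx _
    exact toggle_ne i0 k0 x
  · intro x hx
    exact toggle_toggle i0 k0 x

----------------------------------------------------------------
-- force
----------------------------------------------------------------

noncomputable def force {d : ℕ} (c : S → S) (hinv : ∀ s, c (c s) = s) (Rf : Finset S)
    (D0 : Finset (Fin d)) (u : Fin d → S) (hu : ∀ i, rep c hinv (u i) ∈ Rf)
    (b : Fin d → Bool) (x : Fin d → ↥Rf → Bool) : Fin d → ↥Rf → Bool :=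
  fun i => if i ∈ D0 then Function.update (x i) ⟨rep c hinv (u i), hu i⟩ (b i) else x i

lemma row_force_notin {d : ℕ} (c : S → S) (hinv : ∀ s, c (c s) = s) (Rf : Finset S)
    (D0 : Finset (Fin d)) (u : Fin d → S) (hu : ∀ i, rep c hinv (u i) ∈ Rf)
    (b : Fin d → Bool) (x : Fin d → ↥Rf → Bool) {i : Fin d} (h : i ∉ D0) (s : S) :
    row c hinv Rf (force c hinv Rf D0 u hu b x) i s = row c hinv Rf x i s := by
  unfold row force
  rw [if_neg h]

lemma row_force_ne {d : ℕ} (c : S → S) (hinv : ∀ s, c (c s) = s) (Rf : Finset S)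
    (D0 : Finset (Fin d)) (u : Fin d → S) (hu : ∀ i, rep c hinv (u i) ∈ Rf)
    (b : Fin d → Bool) (x : Fin d → ↥Rf → Bool) {i : Fin d} (h : i ∈ D0) {s : S}
    (hne : rep c hinv s ≠ rep c hinv (u i)) :
    row c hinv Rf (force c hinv Rf D0 u hu b x) i s = row c hinv Rf x i s := by
  have hkne : ∀ (hms : rep c hinv s ∈ Rf),
      (⟨rep c hinv s, hms⟩ : ↥Rf) ≠ ⟨rep c hinv (u i), hu i⟩ :=
    fun hms he => hne (congrArg Subtype.val he)
  unfold row force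
  rw [if_pos h]
  split
  · next hm => exact Function.update_of_ne (hkne hm) _ _
  · rfl

lemma row_force_eq {d : ℕ} (c : S → S) (hinv : ∀ s, c (c s) = s) (Rf : Finset S)
    (D0 : Finset (Fin d)) (u : Fin d → S) (hu : ∀ i, rep c hinv (u i) ∈ Rf)
    (b : Fin d → Bool) (x : Fin d → ↥Rf → Bool) {i : Fin d} (h : i ∈ D0) {s : S}
    (heq : rep c hinv s = rep c hinv (u i)) :
    row c hinv Rf (force c hinv Rf D0 u hu b x) i s = b i := by
  have hm : rep c hinv s ∈ Rf := heq ▸ hu i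
  unfold row force
  rw [dif_pos hm, if_pos h]
  have he : (⟨rep c hinv s, hm⟩ : ↥Rf) = ⟨rep c hinv (u i), hu i⟩ := Subtype.ext heq
  rw [he, Function.update_self]

lemma force_force {d : ℕ} (c : S → S) (hinv : ∀ s, c (c s) = s) (Rf : Finset S)
    (D0 : Finset (Fin d)) (u : Fin d → S) (hu : ∀ i, rep c hinv (u i) ∈ Rf)
    (b b' : Fin d → Bool) (x : Fin d → ↥Rf → Bool) :
    force c hinv Rf D0 u hu b (force c hinv Rf D0 u hu b' x)
      = force c hinv Rf D0 u hu b x := by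
  funext i
  unfold force
  by_cases h : i ∈ D0
  · rw [if_pos h, if_pos h, if_pos h, Function.update_idem]
  · rw [if_neg h, if_neg h, if_neg h]

lemma force_eq_self {d : ℕ} (c : S → S) (hinv : ∀ s, c (c s) = s) (Rf : Finset S)
    (D0 : Finset (Fin d)) (u : Fin d → S) (hu : ∀ i, rep c hinv (u i) ∈ Rf)
    (b : Fin d → Bool) (x : Fin d → ↥Rf → Bool)
    (hx : ∀ i ∈ D0, x i ⟨rep c hinv (u i), hu i⟩ = b i) :
    force c hinv Rf D0 u hu b x = x := by
  funext i
  unfold force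
  by_cases h : i ∈ D0
  · rw [if_pos h, ← hx i h, Function.update_eq_self]
  · rw [if_neg h]


----------------------------------------------------------------
-- Dset / Aset / sgn
----------------------------------------------------------------

def Dset {d : ℕ} (v w : Fin d → S) : Finset (Fin d) :=
  Finset.univ.filter (fun i => w i ≠ v i)

lemma mem_Dset {d : ℕ} {v w : Fin d → S} {i : Fin d} : i ∈ Dset v w ↔ w i ≠ v i := by
  simp [Dset]

noncomputable def Aset (c : S → S) (hinv : ∀ s, c (c s) = s) {d : ℕ} (v w : Fin d → S) :
    Finset (Fin d × S) :=
  (Dset v w).image (fun i => (i, rep c hinv (w i)))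

lemma Aset_imp (c : S → S) (hinv : ∀ s, c (c s) = s) {d : ℕ} {v u w : Fin d → S}
    (h : Aset c hinv v u = Aset c hinv v w) :
    ∀ i ∈ Dset v u, i ∈ Dset v w ∧ rep c hinv (u i) = rep c hinv (w i) := by
  intro i hi
  have hmem : (i, rep c hinv (u i)) ∈ Aset c hinv v w := by
    rw [← h]
    exact Finset.mem_image_of_mem _ hi
  obtain ⟨j, hj, hje⟩ := Finset.mem_image.mp hmem
  obtain ⟨h1, h2⟩ := Prod.ext_iff.mp hje
  simp only at h1 h2
  subst h1
  exact ⟨hj, h2.symm⟩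

noncomputable def sgn (c : S → S) (hinv : ∀ s, c (c s) = s) {d : ℕ}
    (D0 : Finset (Fin d)) (w : Fin d → S) : ℤ :=
  ∏ i ∈ D0, if req c hinv (w i) = true then 1 else -1

lemma sgn_pm (c : S → S) (hinv : ∀ s, c (c s) = s) {d : ℕ}
    (D0 : Finset (Fin d)) (w : Fin d → S) :
    sgn c hinv D0 w = 1 ∨ sgn c hinv D0 w = -1 := by
  classical
  unfold sgn
  rw [Finset.prod_ite (fun _ => (1:ℤ)) (fun _ => (-1:ℤ)), Finset.prod_const_one, one_mul,
    Finset.prod_const]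
  rcases Nat.even_or_odd (D0.filter (fun i => ¬ req c hinv (w i) = true)).card with h | h
  · exact Or.inl h.neg_one_pow
  · exact Or.inr h.neg_one_pow

end Stmt19


open Stmt19 in
/-- rigidity. Let `W` be a genome of `2^d` pairwise dichotomous words
with an induced decomposition `W = W⁺ ∪ W⁻` (two words of `W` lying in a common class
`C_w` fall in the same part iff they differ in an even number of letters). If a word
`v` is dichotomous to every word of `W⁺`, then `v ∈ W⁻`. -/
theorem stmt_19 (S : Type*) [DecidableEq S] (c : S → S)
    (hinv : ∀ s, c (c s) = s) (hfix : ∀ s, c s ≠ s)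
    {d : ℕ} (W Wp Wm : Finset (Fin d → S))
    (hW : ∀ u ∈ W, ∀ w ∈ W, u ≠ w → ∃ i, u i = c (w i))
    (hcard : W.card = 2 ^ d)
    (hunion : Wp ∪ Wm = W) (hdisj : Disjoint Wp Wm)
    (hsign : ∀ u ∈ W, ∀ w ∈ W, ∀ ε : Fin d → Bool,
      w = (fun i => if ε i then c (u i) else u i) →
      ((u ∈ Wp ↔ w ∈ Wp) ↔ Even (Finset.univ.filter (fun i => ε i = true)).card))
    (v : Fin d → S) (hv : ∀ w ∈ Wp, ∃ i, v i = c (w i)) :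
    v ∈ Wm := by
  classical
  by_cases hvW : v ∈ W
  · have hvp : v ∉ Wp := by
      intro hvp
      obtain ⟨i, hi⟩ := hv v hvp
      exact hfix (v i) hi.symm
    have hmem : v ∈ Wp ∪ Wm := by rw [hunion]; exact hvW
    exact (Finset.mem_union.mp hmem).resolve_left hvp
  · exfalso
    set letters : Finset S :=
      (Finset.univ.image v) ∪ W.biUnion (fun w => Finset.univ.image w) with hletters
    set Rf : Finset S := letters.image (rep c hinv) with hRfdef
    have hvR : ∀ i, rep c hinv (v i) ∈ Rf := by
      intro i
      rw [hRfdef]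
      apply Finset.mem_image_of_mem
      rw [hletters]
      exact Finset.mem_union_left _ (Finset.mem_image_of_mem v (Finset.mem_univ i))
    have hwR : ∀ w ∈ W, ∀ i, rep c hinv (w i) ∈ Rf := by
      intro w hw i
      rw [hRfdef]
      apply Finset.mem_image_of_mem
      rw [hletters]
      exact Finset.mem_union_right _
        (Finset.mem_biUnion.mpr ⟨w, hw, Finset.mem_image_of_mem w (Finset.mem_univ i)⟩)
    set M : Finset (Fin d → S) := W.filter (fun w => ∀ i, v i ≠ c (w i)) with hMdef
    have hMW : ∀ w ∈ M, w ∈ W := fun w hw => (Finset.mem_filter.mp hw).1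
    have hMc : ∀ w ∈ M, ∀ i, v i ≠ c (w i) := fun w hw => (Finset.mem_filter.mp hw).2
    have hMnp : ∀ w ∈ M, w ∉ Wp := by
      intro w hw hwp
      obtain ⟨i, hi⟩ := hv w hwp
      exact hMc w hw i hi
    have hMrep : ∀ w ∈ M, ∀ i, w i ≠ v i → rep c hinv (w i) ≠ rep c hinv (v i) := by
      intro w hw i hne heq
      rcases orbit_of_rep_eq c hinv heq with h | h
      · exact hne h
      · exact hMc w hw i (by rw [h, hinv])
    -- a selection selecting v
    set xv : Fin d → ↥Rf → Bool := fun i r => decide ((r : S) = v i) with hxvdef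
    have hselv : Sel c hinv Rf xv v := by
      intro i
      rw [row_eq c hinv Rf xv i (hvR i), hxvdef]
      rfl
    have hMsel : ∀ x : Fin d → ↥Rf → Bool, Sel c hinv Rf x v →
        ∀ w ∈ W, Sel c hinv Rf x w → w ∈ M := by
      intro x hxv w hw hxw
      rw [hMdef, Finset.mem_filter]
      exact ⟨hw, fun i hi => sel_conflict c hinv hfix Rf hxv hxw hi⟩
    have hMne : M.Nonempty := by
      obtain ⟨w, hw, hsel⟩ := exists_sel c hinv hfix W Rf hW hcard hwR xv
      exact ⟨w, hMsel xv hselv w hw hsel⟩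
    -- maximal word
    obtain ⟨ws, hwsM, hmax⟩ := Finset.exists_max_image M (fun w => (Aset c hinv v w).card) hMne
    have hwsW : ws ∈ W := hMW ws hwsM
    have hwsR : ∀ i, rep c hinv (ws i) ∈ Rf := hwR ws hwsW
    have hwsnev : ws ≠ v := fun h => hvW (h ▸ hwsW)
    obtain ⟨i0, hi0'⟩ := Function.ne_iff.mp hwsnev
    have hi0 : i0 ∈ Dset v ws := mem_Dset.mpr hi0'
    have hmax' : ∀ w ∈ M, Aset c hinv v ws ⊆ Aset c hinv v w →
        Aset c hinv v w = Aset c hinv v ws := by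
      intro w hw hsub
      exact (Finset.eq_of_subset_of_card_le hsub (hmax w hw)).symm
    -- toggling preserves selection away from the key
    have hsel_toggle : ∀ (w : Fin d → S) (i1 : Fin d) (k1 : ↥Rf),
        rep c hinv (w i1) ≠ (k1 : S) →
        ∀ x, Sel c hinv Rf x w → Sel c hinv Rf (toggle i1 k1 x) w := by
      intro w i1 k1 hne x hsel i
      by_cases hii : i = i1
      · subst hii
        rw [row_toggle_diag_ne c hinv Rf i k1 x hne]
        exact hsel i
      · rw [row_toggle_ne c hinv Rf i1 k1 x hii]
        exact hsel i
    -- unique selected word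
    have hex : ∀ x : Fin d → ↥Rf → Bool, ∃ w, w ∈ W ∧ Sel c hinv Rf x w := by
      intro x
      obtain ⟨w, h1, h2⟩ := exists_sel c hinv hfix W Rf hW hcard hwR x
      exact ⟨w, h1, h2⟩
    choose selw hselwW hselwS using hex
    have huniq : ∀ (x : Fin d → ↥Rf → Bool) (w : Fin d → S),
        w ∈ W → Sel c hinv Rf x w → selw x = w := by
      intro x w hw hsel
      by_contra hne
      obtain ⟨i, hi⟩ := hW (selw x) (hselwW x) w hw hne
      exact sel_conflict c hinv hfix Rf (hselwS x) hsel hi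
    set Xv : Finset (Fin d → ↥Rf → Bool) :=
      Finset.univ.filter (fun x => Sel c hinv Rf x v) with hXvdef
    -- claim 1 : total signed sum vanishes
    have claim1 : ∑ x ∈ Xv, chi c hinv Rf (Dset v ws) ws x = 0 := by
      refine sum_chi_zero c hinv Rf (Dset v ws) ws hi0
        ⟨rep c hinv (ws i0), hwsR i0⟩ (hwsR i0) rfl Xv ?_
      intro x hx
      rw [hXvdef, Finset.mem_filter] at hx ⊢
      exact ⟨Finset.mem_univ _,
        hsel_toggle v i0 _ (fun h => hMrep ws hwsM i0 hi0' h.symm) x hx.2⟩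
    have hfib := Finset.sum_fiberwise_of_maps_to (s := Xv) (t := W) (g := selw)
      (fun x _ => hselwW x) (chi c hinv Rf (Dset v ws) ws)
    have hfib_eq : ∀ w ∈ W, Xv.filter (fun x => selw x = w)
        = Finset.univ.filter (fun x => Sel c hinv Rf x v ∧ Sel c hinv Rf x w) := by
      intro w hw
      ext x
      rw [hXvdef]
      simp only [Finset.mem_filter, Finset.mem_univ, true_and]
      constructor
      · rintro ⟨hv', hsw⟩
        exact ⟨hv', hsw ▸ hselwS x⟩
      · rintro ⟨hv', hsw⟩
        exact ⟨hv', huniq x w hw hsw⟩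
    -- inner sums
    have hinner : ∀ w ∈ W,
        ∑ x ∈ Finset.univ.filter (fun x => Sel c hinv Rf x v ∧ Sel c hinv Rf x w),
          chi c hinv Rf (Dset v ws) ws x
        = if w ∈ M ∧ Aset c hinv v w = Aset c hinv v ws
            then ((Finset.univ.filter
                (fun x => Sel c hinv Rf x v ∧ Sel c hinv Rf x w)).card : ℤ)
              * sgn c hinv (Dset v ws) w
            else 0 := by
      intro w hw
      by_cases hwM : w ∈ M
      · by_cases hAw : Aset c hinv v w = Aset c hinv v ws
        · rw [if_pos ⟨hwM, hAw⟩]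
          have hrepe : ∀ i ∈ Dset v ws, rep c hinv (ws i) = rep c hinv (w i) :=
            fun i hi => (Aset_imp c hinv hAw.symm i hi).2
          have hch : ∀ x ∈ Finset.univ.filter
              (fun x => Sel c hinv Rf x v ∧ Sel c hinv Rf x w),
              chi c hinv Rf (Dset v ws) ws x = sgn c hinv (Dset v ws) w := by
            intro x hx
            rw [Finset.mem_filter] at hx
            unfold chi sgn
            refine Finset.prod_congr rfl (fun i hi => ?_)
            rw [row_congr c hinv Rf x i (hrepe i hi), hx.2.2 i]
          rw [Finset.sum_congr rfl hch, Finset.sum_const, nsmul_eq_mul]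
        · rw [if_neg (fun h => hAw h.2)]
          have hnsub : ¬ (Aset c hinv v ws ⊆ Aset c hinv v w) :=
            fun hsub => hAw (hmax' w hwM hsub)
          obtain ⟨p, hpin, hpout⟩ := Finset.not_subset.mp hnsub
          obtain ⟨j, hj, hje⟩ := Finset.mem_image.mp hpin
          have hj' : ws j ≠ v j := mem_Dset.mp hj
          have hkey_w : rep c hinv (w j) ≠ rep c hinv (ws j) := by
            intro heq
            apply hpout
            rw [← hje]
            by_cases hjD : j ∈ Dset v w
            · have hmem2 : (j, rep c hinv (w j)) ∈ Aset c hinv v w :=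
                Finset.mem_image_of_mem _ hjD
              rwa [heq] at hmem2
            · exfalso
              have hwv : w j = v j := by
                by_contra hne
                exact hjD (mem_Dset.mpr hne)
              exact hMrep ws hwsM j hj' (by rw [← heq, hwv])
          have hkey_v : rep c hinv (v j) ≠ rep c hinv (ws j) :=
            fun h => hMrep ws hwsM j hj' h.symm
          refine sum_chi_zero c hinv Rf (Dset v ws) ws hj
            ⟨rep c hinv (ws j), hwsR j⟩ (hwsR j) rfl _ ?_
          intro x hx
          rw [Finset.mem_filter] at hx ⊢
          exact ⟨Finset.mem_univ _, hsel_toggle v j _ hkey_v x hx.2.1,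
            hsel_toggle w j _ hkey_w x hx.2.2⟩
      · rw [if_neg (fun h => hwM h.1)]
        have hdich : ∃ i, v i = c (w i) := by
          by_contra h
          push_neg at h
          exact hwM (by rw [hMdef]; exact Finset.mem_filter.mpr ⟨hw, h⟩)
        obtain ⟨i, hi⟩ := hdich
        rw [Finset.filter_false_of_mem (fun x _ h => sel_conflict c hinv hfix Rf h.1 h.2 hi),
          Finset.sum_empty]
    -- assembled total
    have htot0 : ∑ w ∈ W,
        (if w ∈ M ∧ Aset c hinv v w = Aset c hinv v ws
          then ((Finset.univ.filter
              (fun x => Sel c hinv Rf x v ∧ Sel c hinv Rf x w)).card : ℤ)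
            * sgn c hinv (Dset v ws) w
          else 0) = 0 := by
      calc ∑ w ∈ W, (if w ∈ M ∧ Aset c hinv v w = Aset c hinv v ws
            then ((Finset.univ.filter
                (fun x => Sel c hinv Rf x v ∧ Sel c hinv Rf x w)).card : ℤ)
              * sgn c hinv (Dset v ws) w
            else 0)
          = ∑ w ∈ W, ∑ x ∈ Finset.univ.filter
              (fun x => Sel c hinv Rf x v ∧ Sel c hinv Rf x w),
              chi c hinv Rf (Dset v ws) ws x :=
            Finset.sum_congr rfl (fun w hw => (hinner w hw).symm)
        _ = ∑ w ∈ W, ∑ x ∈ Xv.filter (fun x => selw x = w),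
              chi c hinv Rf (Dset v ws) ws x :=
            Finset.sum_congr rfl (fun w hw => by rw [hfib_eq w hw])
        _ = ∑ x ∈ Xv, chi c hinv Rf (Dset v ws) ws x := hfib
        _ = 0 := claim1
    -- all the fibers on the maximal class have the same positive cardinality
    set N : ℕ := (Finset.univ.filter
      (fun x => Sel c hinv Rf x v ∧ Sel c hinv Rf x ws)).card with hNdef
    have hNw : ∀ w ∈ M, Aset c hinv v w = Aset c hinv v ws →
        (Finset.univ.filter (fun x => Sel c hinv Rf x v ∧ Sel c hinv Rf x w)).card = N := by
      intro w hwM hAw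
      have h1 := Aset_imp c hinv hAw
      have h2 := Aset_imp c hinv hAw.symm
      have hwRm : ∀ i, rep c hinv (w i) ∈ Rf := hwR w (hMW w hwM)
      rw [hNdef]
      refine Finset.card_bij'
        (fun x _ => force c hinv Rf (Dset v ws) ws hwsR (fun i => req c hinv (ws i)) x)
        (fun x _ => force c hinv Rf (Dset v ws) ws hwsR (fun i => req c hinv (w i)) x)
        ?_ ?_ ?_ ?_
      · intro x hx
        rw [Finset.mem_filter] at hx ⊢
        obtain ⟨-, hxv', hxw⟩ := hx
        have hselv2 : Sel c hinv Rf
            (force c hinv Rf (Dset v ws) ws hwsR (fun i => req c hinv (ws i)) x) v := by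
          intro i
          by_cases hi : i ∈ Dset v ws
          · rw [row_force_ne c hinv Rf _ ws hwsR _ x hi
              (fun h => hMrep ws hwsM i (mem_Dset.mp hi) h.symm)]
            exact hxv' i
          · rw [row_force_notin c hinv Rf _ ws hwsR _ x hi]
            exact hxv' i
        refine ⟨Finset.mem_univ _, hselv2, ?_⟩
        intro i
        by_cases hi : i ∈ Dset v ws
        · rw [row_force_eq c hinv Rf _ ws hwsR _ x hi rfl]
        · have hwsv : ws i = v i := by
            by_contra hne
            exact hi (mem_Dset.mpr hne)
          rw [hwsv]
          exact hselv2 i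
      · intro x hx
        rw [Finset.mem_filter] at hx ⊢
        obtain ⟨-, hxv', hxws⟩ := hx
        have hselv2 : Sel c hinv Rf
            (force c hinv Rf (Dset v ws) ws hwsR (fun i => req c hinv (w i)) x) v := by
          intro i
          by_cases hi : i ∈ Dset v ws
          · rw [row_force_ne c hinv Rf _ ws hwsR _ x hi
              (fun h => hMrep ws hwsM i (mem_Dset.mp hi) h.symm)]
            exact hxv' i
          · rw [row_force_notin c hinv Rf _ ws hwsR _ x hi]
            exact hxv' i
        refine ⟨Finset.mem_univ _, hselv2, ?_⟩
        intro i
        by_cases hi : i ∈ Dset v ws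
        · rw [row_force_eq c hinv Rf _ ws hwsR _ x hi (h2 i hi).2.symm]
        · have hwv : w i = v i := by
            by_contra hne
            exact hi ((h1 i (mem_Dset.mpr hne)).1)
          rw [hwv]
          exact hselv2 i
      · intro x hx
        rw [Finset.mem_filter] at hx
        show force c hinv Rf (Dset v ws) ws hwsR (fun i => req c hinv (w i))
          (force c hinv Rf (Dset v ws) ws hwsR (fun i => req c hinv (ws i)) x) = x
        rw [force_force]
        apply force_eq_self
        intro i hi
        have hx2 := hx.2.2 i
        rw [row_eq c hinv Rf x i (hwRm i)] at hx2
        have hkeq : (⟨rep c hinv (ws i), hwsR i⟩ : ↥Rf)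
            = ⟨rep c hinv (w i), hwRm i⟩ := Subtype.ext (h2 i hi).2
        rw [hkeq]
        exact hx2
      · intro x hx
        rw [Finset.mem_filter] at hx
        show force c hinv Rf (Dset v ws) ws hwsR (fun i => req c hinv (ws i))
          (force c hinv Rf (Dset v ws) ws hwsR (fun i => req c hinv (w i)) x) = x
        rw [force_force]
        apply force_eq_self
        intro i hi
        have hx2 := hx.2.2 i
        rw [row_eq c hinv Rf x i (hwsR i)] at hx2
        exact hx2
    -- positivity
    set x0 : Fin d → ↥Rf → Bool := fun i r =>
      if (r : S) = rep c hinv (ws i) then req c hinv (ws i)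
      else decide ((r : S) = v i) with hx0def
    have hx0ws : Sel c hinv Rf x0 ws := by
      intro i
      rw [row_eq c hinv Rf x0 i (hwsR i), hx0def]
      show (if rep c hinv (ws i) = rep c hinv (ws i) then req c hinv (ws i)
        else decide (rep c hinv (ws i) = v i)) = req c hinv (ws i)
      rw [if_pos rfl]
    have hx0v : Sel c hinv Rf x0 v := by
      intro i
      rw [row_eq c hinv Rf x0 i (hvR i), hx0def]
      show (if rep c hinv (v i) = rep c hinv (ws i) then req c hinv (ws i)
        else decide (rep c hinv (v i) = v i)) = req c hinv (v i)
      by_cases h : rep c hinv (v i) = rep c hinv (ws i)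
      · rw [if_pos h]
        rcases orbit_of_rep_eq c hinv h with he | he
        · rw [he]
        · exact absurd he (hMc ws hwsM i)
      · rw [if_neg h]
        rfl
    have hNpos : 0 < N := by
      rw [hNdef]
      exact Finset.card_pos.mpr
        ⟨x0, Finset.mem_filter.mpr ⟨Finset.mem_univ _, hx0v, hx0ws⟩⟩
    -- sum of signs on the maximal class is 0
    have htot1 : ∑ w ∈ W,
        (if w ∈ M ∧ Aset c hinv v w = Aset c hinv v ws
          then (N : ℤ) * sgn c hinv (Dset v ws) w else 0) = 0 := by
      have hcongr : ∑ w ∈ W,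
          (if w ∈ M ∧ Aset c hinv v w = Aset c hinv v ws
            then (N : ℤ) * sgn c hinv (Dset v ws) w else 0)
          = ∑ w ∈ W,
          (if w ∈ M ∧ Aset c hinv v w = Aset c hinv v ws
            then ((Finset.univ.filter
                (fun x => Sel c hinv Rf x v ∧ Sel c hinv Rf x w)).card : ℤ)
              * sgn c hinv (Dset v ws) w
            else 0) := by
        refine Finset.sum_congr rfl (fun w hw => ?_)
        by_cases h : w ∈ M ∧ Aset c hinv v w = Aset c hinv v ws
        · rw [if_pos h, if_pos h, hNw w h.1 h.2]
        · rw [if_neg h, if_neg h]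
      rw [hcongr]
      exact htot0
    set W' : Finset (Fin d → S) :=
      W.filter (fun w => w ∈ M ∧ Aset c hinv v w = Aset c hinv v ws) with hW'def
    have hsg0 : ∑ w ∈ W', sgn c hinv (Dset v ws) w = 0 := by
      have h1 : (N : ℤ) * ∑ w ∈ W', sgn c hinv (Dset v ws) w = 0 := by
        rw [Finset.mul_sum, hW'def, Finset.sum_filter]
        exact htot1
      rcases mul_eq_zero.mp h1 with h | h
      · exact absurd h (by exact_mod_cast hNpos.ne')
      · exact h
    have hwsW' : ws ∈ W' := by
      rw [hW'def]
      exact Finset.mem_filter.mpr ⟨hwsW, hwsM, rfl⟩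
    -- two words of the maximal class with opposite signs
    have hex' : ∃ w' ∈ W', sgn c hinv (Dset v ws) w' ≠ sgn c hinv (Dset v ws) ws := by
      by_contra hc
      push_neg at hc
      have hsum : ∑ w ∈ W', sgn c hinv (Dset v ws) w
          = (W'.card : ℤ) * sgn c hinv (Dset v ws) ws := by
        rw [Finset.sum_congr rfl hc, Finset.sum_const, nsmul_eq_mul]
      rw [hsg0] at hsum
      have hczero : (W'.card : ℤ) = 0 := by
        rcases sgn_pm c hinv (Dset v ws) ws with h | h <;> rw [h] at hsum <;> omega
      have : W' = ∅ := Finset.card_eq_zero.mp (by exact_mod_cast hczero)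
      rw [this] at hwsW'
      exact absurd hwsW' (Finset.notMem_empty ws)
    obtain ⟨w', hw'W', hsgne⟩ := hex'
    have hw'M : w' ∈ M := ((Finset.mem_filter.mp hw'W').2).1
    have hw'A : Aset c hinv v w' = Aset c hinv v ws := ((Finset.mem_filter.mp hw'W').2).2
    have hw'W : w' ∈ W := hMW w' hw'M
    have h1' := Aset_imp c hinv hw'A
    have h2' := Aset_imp c hinv hw'A.symm
    -- the pointwise product formula
    have hprodpt : sgn c hinv (Dset v ws) ws * sgn c hinv (Dset v ws) w'
        = ∏ i ∈ Dset v ws, (if ws i = w' i then (1:ℤ) else -1) := by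
      unfold sgn
      rw [← Finset.prod_mul_distrib]
      refine Finset.prod_congr rfl (fun i hi => ?_)
      have hrep : rep c hinv (ws i) = rep c hinv (w' i) := (h2' i hi).2
      by_cases he : ws i = w' i
      · rw [if_pos he, he]
        cases hb : req c hinv (w' i) <;> simp [hb]
      · have hcw : w' i = c (ws i) := by
          rcases orbit_of_rep_eq c hinv hrep.symm with h | h
          · exact absurd h.symm he
          · exact h
        rw [if_neg he, hcw, req_c c hinv hfix]
        cases hb : req c hinv (ws i) <;> simp [hb]
    have hprodneg : sgn c hinv (Dset v ws) ws * sgn c hinv (Dset v ws) w' = -1 := by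
      rcases sgn_pm c hinv (Dset v ws) ws with h1 | h1 <;>
        rcases sgn_pm c hinv (Dset v ws) w' with h2 | h2
      · exact absurd (h2.trans h1.symm) hsgne
      · rw [h1, h2]; norm_num
      · rw [h1, h2]; norm_num
      · exact absurd (h2.trans h1.symm) hsgne
    -- the flip pattern
    set ε : Fin d → Bool := fun i => !(decide (ws i = w' i)) with hεdef
    have hfunext : w' = fun i => if ε i then c (ws i) else ws i := by
      funext i
      rw [hεdef]
      by_cases he : ws i = w' i
      · simp [he]
      · have hiD : i ∈ Dset v ws := by
          by_contra hiD
          have hws : ws i = v i := by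
            by_contra hne
            exact hiD (mem_Dset.mpr hne)
          have hw'v : w' i = v i := by
            by_contra hne
            exact hiD ((h1' i (mem_Dset.mpr hne)).1)
          exact he (hws.trans hw'v.symm)
        have hrep : rep c hinv (ws i) = rep c hinv (w' i) := (h2' i hiD).2
        have hcw : w' i = c (ws i) := by
          rcases orbit_of_rep_eq c hinv hrep.symm with h | h
          · exact absurd h.symm he
          · exact h
        have hne2 : ws i ≠ c (ws i) := fun hh => hfix (ws i) hh.symm
        simp [hcw, hne2]
    -- parity sets agree
    have hseteq : Finset.univ.filter (fun i => ε i = true)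
        = (Dset v ws).filter (fun i => ¬ (ws i = w' i)) := by
      ext i
      simp only [Finset.mem_filter, Finset.mem_univ, true_and, hεdef,
        Bool.not_eq_true', decide_eq_false_iff_not]
      constructor
      · intro hne
        refine ⟨?_, hne⟩
        by_contra hiD
        have hws : ws i = v i := by
          by_contra hne2
          exact hiD (mem_Dset.mpr hne2)
        have hw'v : w' i = v i := by
          by_contra hne2
          exact hiD ((h1' i (mem_Dset.mpr hne2)).1)
        exact hne (hws.trans hw'v.symm)
      · exact fun h => h.2
    -- even by the sign hypothesis
    have heven : Even (Finset.univ.filter (fun i => ε i = true)).card := by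
      refine (hsign ws hwsW w' hw'W ε hfunext).mp ?_
      constructor
      · intro h
        exact absurd h (hMnp ws hwsM)
      · intro h
        exact absurd h (hMnp w' hw'M)
    -- odd by the sign computation
    have hpow : ∏ i ∈ Dset v ws, (if ws i = w' i then (1:ℤ) else -1)
        = (-1 : ℤ) ^ ((Dset v ws).filter (fun i => ¬ (ws i = w' i))).card := by
      rw [Finset.prod_ite (fun _ => (1:ℤ)) (fun _ => (-1:ℤ)), Finset.prod_const_one,
        one_mul, Finset.prod_const]
    have hcontr : (-1 : ℤ) ^ ((Dset v ws).filter (fun i => ¬ (ws i = w' i))).card = -1 := by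
      rw [← hpow, ← hprodpt]
      exact hprodneg
    rw [hseteq] at heven
    have hone : (-1 : ℤ) ^ ((Dset v ws).filter (fun i => ¬ (ws i = w' i))).card = 1 :=
      heven.neg_one_pow
    rw [hcontr] at hone
    norm_num at hone
end
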